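/- arXiv:math/0605420 — 13 statements merged into one kernel-verified Lean document; each statement's English description precedes it below -/
import Mathlib

section
/- Burge shape datum, existence and uniqueness. Let λ, μ, ν be partitions with λ ≤ₕ μ and λ ≤ₕ ν, and let m ∈ ℕ. Then there exists exactly one pair (κ, c), where κ is a partition and c : ℕ → ℕ, satisfying the Burge relations for (λ, μ, ν, m). Moreover this κ satisfies λ ≤ₕ κ, μ ≤ₕ κ, ν ≤ₕ κ, and |κ| = |μ| + |ν| − |λ| + m. -/
/-- A partition: weakly decreasing function `ℕ → ℕ` that is eventually zero. -/
def IsPartition (f : ℕ → ℕ) : Prop :=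
  (∀ i, f (i + 1) ≤ f i) ∧ ∃ N, ∀ i, N ≤ i → f i = 0

/-- The size `|f|` of an eventually-zero function, as a finite sum. -/
noncomputable def psize (f : ℕ → ℕ) : ℕ := ∑ᶠ i, f i

/-- `HStrip a b` means `b/a` is a horizontal strip (written `a ≤ₕ b`). -/
def HStrip (a b : ℕ → ℕ) : Prop := ∀ i, a i ≤ b i ∧ b (i + 1) ≤ a i

/-- `VStrip a b` means `b/a` is a vertical strip (written `a ≤ᵥ b`). -/
def VStrip (a b : ℕ → ℕ) : Prop := ∀ i, a i ≤ b i ∧ b i ≤ a i + 1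

/-- The Young diagram (cell set) of a partition. -/
def cells (f : ℕ → ℕ) : Set (ℕ × ℕ) := {p | p.2 < f p.1}

/-- The transpose partition. -/
noncomputable def ptranspose (f : ℕ → ℕ) : ℕ → ℕ := fun j => {i : ℕ | j < f i}.ncard

/-- The set `S(μ,ν)` of optional squares for the intermediate shape. -/
def Sset (mu nu : ℕ → ℕ) : Set (ℕ × ℕ) :=
  {p | mu p.1 = p.2 + 1 ∧ ptranspose nu p.2 = p.1 + 1}

/-- The set `T(μ,ν)` of optional squares for the resulting shape. -/
def Tset (mu nu : ℕ → ℕ) : Set (ℕ × ℕ) :=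
  {p | ptranspose mu p.2 = p.1 ∧ nu p.1 = p.2}

/-- The Burge relations for `(λ, μ, ν, m)` satisfied by a pair `(κ, c)`,
with the convention `c (-1) = 0`. -/
def BurgeRel (lam mu nu : ℕ → ℕ) (m : ℕ) (kap c : ℕ → ℕ) : Prop :=
  (c 0 + mu 0 + nu 0 = lam 0 + kap 0) ∧
  (∀ i, c (i + 1) + mu (i + 1) + nu (i + 1) = lam (i + 1) + kap (i + 1) + c i) ∧
  (∀ i, kap (i + 1) ≤ lam i) ∧
  (∀ i, 0 < c i → kap (i + 1) = lam i) ∧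
  (∃ N, ∀ i, N ≤ i → c i = m)

/-- auxiliary: the `c` sequence, indexed backwards from `N`. -/
def bG (lam mu nu : ℕ → ℕ) (N m : ℕ) : ℕ → ℕ
  | 0 => m
  | k + 1 => (bG lam mu nu N m k + mu (N - k) + nu (N - k)) - lam (N - k) - lam (N - k - 1)

def bC (lam mu nu : ℕ → ℕ) (N m : ℕ) (i : ℕ) : ℕ := bG lam mu nu N m (N - i)

def bE (lam mu nu : ℕ → ℕ) (N m : ℕ) (i : ℕ) : ℕ :=
  bC lam mu nu N m i + mu i + nu i - lam i

def bK (lam mu nu : ℕ → ℕ) (N m : ℕ) : ℕ → ℕ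
  | 0 => bE lam mu nu N m 0
  | i + 1 => min (lam i) (bE lam mu nu N m (i + 1))

lemma bC_large (lam mu nu : ℕ → ℕ) (N m : ℕ) {i : ℕ} (h : N ≤ i) :
    bC lam mu nu N m i = m := by
  have : N - i = 0 := by omega
  simp [bC, this, bG]

lemma bC_rec (lam mu nu : ℕ → ℕ) (N m : ℕ)
    (hN : ∀ j, N ≤ j → lam j = 0 ∧ mu j = 0 ∧ nu j = 0) (i : ℕ) :
    bC lam mu nu N m i
      = (bC lam mu nu N m (i + 1) + mu (i + 1) + nu (i + 1)) - lam (i + 1) - lam i := by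
  rcases lt_or_ge i N with h | h
  · have h1 : N - i = (N - (i + 1)) + 1 := by omega
    have h2 : N - (N - (i + 1)) = i + 1 := by omega
    have h3 : N - (N - (i + 1)) - 1 = i := by omega
    show bG lam mu nu N m (N - i) = _
    rw [h1, bG, h2]
    simp only [Nat.add_sub_cancel]
    rfl
  · have hz1 := hN i h
    have hz2 := hN (i + 1) (by omega)
    rw [bC_large lam mu nu N m h, bC_large lam mu nu N m (by omega : N ≤ i + 1),
      hz1.1, hz2.1, hz2.2.1, hz2.2.2]
    omega

section Main

variable (lam mu nu : ℕ → ℕ) (N m : ℕ)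

lemma bE_lam (hlm : HStrip lam mu) (i : ℕ) :
    bE lam mu nu N m i + lam i = bC lam mu nu N m i + mu i + nu i := by
  have := (hlm i).1
  unfold bE; omega

lemma bC_eq_E (hN : ∀ j, N ≤ j → lam j = 0 ∧ mu j = 0 ∧ nu j = 0)
    (hlm : HStrip lam mu) (i : ℕ) :
    bC lam mu nu N m i = bE lam mu nu N m (i + 1) - lam i := by
  have h1 := bC_rec lam mu nu N m hN i
  have h2 := bE_lam lam mu nu N m hlm (i + 1)
  have := (hlm (i + 1)).1
  omega

theorem burge_main (hlam : IsPartition lam) (hlm : HStrip lam mu) (hln : HStrip lam nu)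
    (hN : ∀ j, N ≤ j → lam j = 0 ∧ mu j = 0 ∧ nu j = 0) :
    IsPartition (bK lam mu nu N m) ∧
    BurgeRel lam mu nu m (bK lam mu nu N m) (bC lam mu nu N m) ∧
    HStrip lam (bK lam mu nu N m) ∧ HStrip mu (bK lam mu nu N m) ∧
    HStrip nu (bK lam mu nu N m) ∧
    psize (bK lam mu nu N m) + psize lam = psize mu + psize nu + m := by
  set c := bC lam mu nu N m with hc
  set E := bE lam mu nu N m with hEdef
  set kap := bK lam mu nu N m with hk
  have hE : ∀ i, E i + lam i = c i + mu i + nu i := bE_lam lam mu nu N m hlm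
  have hCE : ∀ i, c i = E (i + 1) - lam i := bC_eq_E lam mu nu N m hN hlm
  have hElam : ∀ i, lam i ≤ E i := by
    intro i
    have h1 := hE i; have h2 := (hlm i).1; have h3 := (hln i).1
    omega
  have hk0 : kap 0 = E 0 := rfl
  have hks : ∀ i, kap (i + 1) = min (lam i) (E (i + 1)) := fun i => rfl
  -- lam ≤ kap pointwise
  have hlk : ∀ i, lam i ≤ kap i := by
    intro i
    cases i with
    | zero => rw [hk0]; exact hElam 0
    | succ j =>
      rw [hks]
      exact le_min (hlam.1 j) (hElam (j + 1))
  have hkle : ∀ i, kap (i + 1) ≤ lam i := fun i => by rw [hks]; exact min_le_left _ _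
  -- BurgeRel
  have hrel : BurgeRel lam mu nu m kap c := by
    refine ⟨?_, ?_, hkle, ?_, ⟨N, fun i hi => bC_large lam mu nu N m hi⟩⟩
    · have := hE 0; rw [hk0]; omega
    · intro i
      have h1 := hE (i + 1)
      have h2 := hCE i
      rw [hks]
      rcases le_total (E (i + 1)) (lam i) with h | h
      · rw [min_eq_right h]; omega
      · rw [min_eq_left h]; omega
    · intro i hci
      have h2 := hCE i
      rw [hks]
      have : lam i ≤ E (i + 1) := by omega
      rw [min_eq_left this]
  -- kap is a partition
  have hkpart : IsPartition kap := by
    constructor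
    · intro i
      calc kap (i + 1) ≤ lam i := hkle i
        _ ≤ kap i := hlk i
    · refine ⟨N + 1, fun i hi => ?_⟩
      obtain ⟨j, rfl⟩ : ∃ j, i = j + 1 := ⟨i - 1, by omega⟩
      have := (hN j (by omega)).1
      rw [hks, this]; simp
  -- HStrips
  have hsl : HStrip lam kap := fun i => ⟨hlk i, hkle i⟩
  have hsm : HStrip mu kap := by
    intro i
    constructor
    · cases i with
      | zero =>
        have h1 := hE 0; have h3 := (hln 0).1
        rw [hk0]; omega
      | succ j =>
        rw [hks]
        have h1 := hE (j + 1); have h3 := (hln (j + 1)).1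
        exact le_min (hlm j).2 (by omega)
    · exact le_trans (hkle i) (hlm i).1
  have hsn : HStrip nu kap := by
    intro i
    constructor
    · cases i with
      | zero =>
        have h1 := hE 0; have h3 := (hlm 0).1
        rw [hk0]; omega
      | succ j =>
        rw [hks]
        have h1 := hE (j + 1); have h3 := (hlm (j + 1)).1
        exact le_min (hln j).2 (by omega)
    · exact le_trans (hkle i) (hln i).1
  refine ⟨hkpart, hrel, hsl, hsm, hsn, ?_⟩
  -- size identity
  have tele : ∀ n, c n + ∑ i ∈ Finset.range (n + 1), (mu i + nu i)
      = ∑ i ∈ Finset.range (n + 1), (lam i + kap i) := by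
    intro n
    induction n with
    | zero => simp [Finset.sum_range_one]; have := hrel.1; omega
    | succ n ih =>
      rw [Finset.sum_range_succ, Finset.sum_range_succ (f := fun i => lam i + kap i)]
      have := hrel.2.1 n
      omega
  have key := tele (N + 1)
  have hcN : c (N + 1) = m := bC_large lam mu nu N m (by omega)
  have hpsize : ∀ f : ℕ → ℕ, (∀ i, N + 2 ≤ i → f i = 0) →
      psize f = ∑ i ∈ Finset.range (N + 2), f i := by
    intro f hf
    exact finsum_eq_finset_sum_of_support_subset f (by
      intro x hx
      simp only [Function.mem_support] at hx
      simp only [Finset.coe_range, Set.mem_Iio]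
      by_contra h
      exact hx (hf x (by omega)))
  have hplam := hpsize lam (fun i hi => (hN i (by omega)).1)
  have hpmu := hpsize mu (fun i hi => (hN i (by omega)).2.1)
  have hpnu := hpsize nu (fun i hi => (hN i (by omega)).2.2)
  have hpkap := hpsize kap (fun i hi => by
    obtain ⟨j, rfl⟩ : ∃ j, i = j + 1 := ⟨i - 1, by omega⟩
    have := (hN j (by omega)).1
    rw [hks, this]; simp)
  rw [Finset.sum_add_distrib, Finset.sum_add_distrib,
    (show N + 1 + 1 = N + 2 from rfl)] at key
  rw [hplam, hpmu, hpnu, hpkap]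
  omega

end Main

lemma burge_unique (lam mu nu : ℕ → ℕ) (m : ℕ) (k1 c1 k2 c2 : ℕ → ℕ)
    (h1 : BurgeRel lam mu nu m k1 c1) (h2 : BurgeRel lam mu nu m k2 c2) :
    k1 = k2 ∧ c1 = c2 := by
  obtain ⟨h10, h1r, h1b, h1f, N1, h1N⟩ := h1
  obtain ⟨h20, h2r, h2b, h2f, N2, h2N⟩ := h2
  have step : ∀ (ka ca kb cb : ℕ → ℕ),
      (∀ i, ca (i+1) + mu (i+1) + nu (i+1) = lam (i+1) + ka (i+1) + ca i) →
      (∀ i, ka (i + 1) ≤ lam i) →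
      (∀ i, cb (i+1) + mu (i+1) + nu (i+1) = lam (i+1) + kb (i+1) + cb i) →
      (∀ i, 0 < cb i → kb (i + 1) = lam i) →
      ∀ i, ca i < cb i → ca (i + 1) < cb (i + 1) := by
    intro ka ca kb cb har hab hbr hbf i hlt
    have hbfi := hbf i (by omega)
    have h3 := hab i
    have h4 := har i
    have h5 := hbr i
    omega
  have mono : ∀ (ka ca kb cb : ℕ → ℕ),
      (∀ i, ca (i+1) + mu (i+1) + nu (i+1) = lam (i+1) + ka (i+1) + ca i) →
      (∀ i, ka (i + 1) ≤ lam i) →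
      (∀ i, cb (i+1) + mu (i+1) + nu (i+1) = lam (i+1) + kb (i+1) + cb i) →
      (∀ i, 0 < cb i → kb (i + 1) = lam i) →
      ∀ i k, ca i < cb i → ca (i + k) < cb (i + k) := by
    intro ka ca kb cb har hab hbr hbf i k
    induction k with
    | zero => exact fun h => h
    | succ k ih =>
      intro h
      exact step ka ca kb cb har hab hbr hbf (i + k) (ih h)
  have hceq : ∀ i, c1 i = c2 i := by
    intro i
    by_contra hne
    rcases Nat.lt_or_ge (c1 i) (c2 i) with h | h
    · have := mono k1 c1 k2 c2 h1r h1b h2r h2f i (max N1 N2 + i - i) h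
      have e1 := h1N (i + (max N1 N2 + i - i)) (by omega)
      have e2 := h2N (i + (max N1 N2 + i - i)) (by omega)
      omega
    · have hlt : c2 i < c1 i := by omega
      have := mono k2 c2 k1 c1 h2r h2b h1r h1f i (max N1 N2 + i - i) hlt
      have e1 := h1N (i + (max N1 N2 + i - i)) (by omega)
      have e2 := h2N (i + (max N1 N2 + i - i)) (by omega)
      omega
  have hkeq : ∀ i, k1 i = k2 i := by
    intro i
    cases i with
    | zero =>
      have e := hceq 0; omega
    | succ j =>
      have e1 := hceq j; have e2 := hceq (j + 1)
      have r1 := h1r j; have r2 := h2r j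
      omega
  exact ⟨funext hkeq, funext hceq⟩


/-- Burge shape datum, existence and uniqueness. -/
theorem burge_shape_datum_exists_unique (lam mu nu : ℕ → ℕ)
    (hlam : IsPartition lam) (hmu : IsPartition mu) (hnu : IsPartition nu)
    (hlm : HStrip lam mu) (hln : HStrip lam nu) (m : ℕ) :
    (∃! p : (ℕ → ℕ) × (ℕ → ℕ), IsPartition p.1 ∧ BurgeRel lam mu nu m p.1 p.2) ∧
    ∀ kap c : ℕ → ℕ, IsPartition kap → BurgeRel lam mu nu m kap c →
      HStrip lam kap ∧ HStrip mu kap ∧ HStrip nu kap ∧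
      psize kap + psize lam = psize mu + psize nu + m := by

  obtain ⟨Nl, hNl⟩ := hlam.2
  obtain ⟨Nm, hNm⟩ := hmu.2
  obtain ⟨Nn, hNn⟩ := hnu.2
  set N := max Nl (max Nm Nn) with hNdef
  have hN : ∀ j, N ≤ j → lam j = 0 ∧ mu j = 0 ∧ nu j = 0 := by
    intro j hj
    exact ⟨hNl j (by omega), hNm j (by omega), hNn j (by omega)⟩
  obtain ⟨hkpart, hrel, hsl, hsm, hsn, hsize⟩ :=
    burge_main lam mu nu N m hlam hlm hln hN
  constructor
  · refine ⟨(bK lam mu nu N m, bC lam mu nu N m), ⟨hkpart, hrel⟩, ?_⟩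
    rintro ⟨ka, ca⟩ ⟨hp, hr⟩
    obtain ⟨e1, e2⟩ := burge_unique lam mu nu m ka ca _ _ hr hrel
    exact Prod.ext e1 e2
  · intro kap c hp hr
    obtain ⟨e1, e2⟩ := burge_unique lam mu nu m kap c _ _ hr hrel
    subst e1
    exact ⟨hsl, hsm, hsn, hsize⟩
end

section
/- Correctness of the downward algorithm computing the Burge shape datum. Let λ, μ, ν be partitions with λ ≤ₕ μ and λ ≤ₕ ν, let m ∈ ℕ, and let N ∈ ℕ with N ≥ 1 be such that μ N = ν N = 0. Define c N := m and, for i = N, N−1, …, 1 in decreasing order: κ i := min(μ i + ν i − λ i + c i, λ (i−1)) and c (i−1) := (μ i + ν i − λ i + c i) − κ i; finally set κ 0 := μ 0 + ν 0 − λ 0 + c 0, and κ i := 0 and c i := m for all i > N. Then κ is a partition satisfying μ ≤ₕ κ and ν ≤ₕ κ, and the pair (κ, c) satisfies the Burge relations for (λ, μ, ν, m); in particular κ does not depend on the choice of N. -/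
lemma evzero_aux (f : ℕ → ℕ) (hf : ∀ i, f (i + 1) ≤ f i) (N : ℕ) (hN : f N = 0) :
    ∀ i, N ≤ i → f i = 0 := by
  intro i hi
  induction i with
  | zero => have h0 : N = 0 := Nat.le_zero.mp hi; exact h0 ▸ hN
  | succ j ih =>
    rcases Nat.eq_or_lt_of_le hi with h | h
    · rwa [← h]
    · have h1 := ih (by omega)
      have h2 := hf j
      omega

/-- Correctness of the downward algorithm computing the Burge shape datum. -/
theorem burge_downward_algorithm_correct (lam mu nu : ℕ → ℕ)
    (hlam : IsPartition lam) (hmu : IsPartition mu) (hnu : IsPartition nu)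
    (hlm : HStrip lam mu) (hln : HStrip lam nu)
    (m N : ℕ) (hN : 1 ≤ N) (hmuN : mu N = 0) (hnuN : nu N = 0)
    (c kap : ℕ → ℕ)
    (hchigh : ∀ i, N ≤ i → c i = m)
    (hclow : ∀ i, i < N →
      c i = (mu (i + 1) + nu (i + 1) + c (i + 1) - lam (i + 1)) -
            min (mu (i + 1) + nu (i + 1) + c (i + 1) - lam (i + 1)) (lam i))
    (hkap0 : kap 0 = mu 0 + nu 0 + c 0 - lam 0)
    (hkaplow : ∀ i, 1 ≤ i → i ≤ N →
      kap i = min (mu i + nu i + c i - lam i) (lam (i - 1)))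
    (hkaphigh : ∀ i, N < i → kap i = 0) :
    IsPartition kap ∧ HStrip mu kap ∧ HStrip nu kap ∧
    BurgeRel lam mu nu m kap c ∧
    (∀ (N' : ℕ) (c' kap' : ℕ → ℕ), 1 ≤ N' → mu N' = 0 → nu N' = 0 →
      (∀ i, N' ≤ i → c' i = m) →
      (∀ i, i < N' →
        c' i = (mu (i + 1) + nu (i + 1) + c' (i + 1) - lam (i + 1)) -
              min (mu (i + 1) + nu (i + 1) + c' (i + 1) - lam (i + 1)) (lam i)) →
      kap' 0 = mu 0 + nu 0 + c' 0 - lam 0 →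
      (∀ i, 1 ≤ i → i ≤ N' →
        kap' i = min (mu i + nu i + c' i - lam i) (lam (i - 1))) →
      (∀ i, N' < i → kap' i = 0) →
      kap' = kap) := by
  have hmu0 : ∀ i, N ≤ i → mu i = 0 := evzero_aux mu hmu.1 N hmuN
  have hnu0 : ∀ i, N ≤ i → nu i = 0 := evzero_aux nu hnu.1 N hnuN
  have hlam0 : ∀ i, N ≤ i → lam i = 0 := by
    intro i hi
    have h1 := (hlm i).1
    have h2 := hmu0 i hi
    omega
  have hkle : ∀ i, kap (i + 1) ≤ lam i := by
    intro i
    by_cases h : i + 1 ≤ N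
    · have hk := hkaplow (i + 1) (by omega) h
      rw [show i + 1 - 1 = i from rfl] at hk
      omega
    · rw [hkaphigh (i + 1) (by omega)]; exact Nat.zero_le _
  have hkge_mu : ∀ i, mu i ≤ kap i := by
    intro i
    match i with
    | 0 =>
      have h1 := (hln 0).1
      rw [hkap0]; omega
    | j + 1 =>
      by_cases h : j + 1 ≤ N
      · have hk := hkaplow (j + 1) (by omega) h
        rw [show j + 1 - 1 = j from rfl] at hk
        have h1 := (hln (j + 1)).1
        have h2 := (hlm j).2
        omega
      · rw [hkaphigh (j + 1) (by omega), hmu0 (j + 1) (by omega)]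
  have hkge_nu : ∀ i, nu i ≤ kap i := by
    intro i
    match i with
    | 0 =>
      have h1 := (hlm 0).1
      rw [hkap0]; omega
    | j + 1 =>
      by_cases h : j + 1 ≤ N
      · have hk := hkaplow (j + 1) (by omega) h
        rw [show j + 1 - 1 = j from rfl] at hk
        have h1 := (hlm (j + 1)).1
        have h2 := (hln j).2
        omega
      · rw [hkaphigh (j + 1) (by omega), hnu0 (j + 1) (by omega)]
  have rel0 : c 0 + mu 0 + nu 0 = lam 0 + kap 0 := by
    have h1 := (hlm 0).1
    rw [hkap0]; omega
  have relS : ∀ i, c (i + 1) + mu (i + 1) + nu (i + 1) = lam (i + 1) + kap (i + 1) + c i := by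
    intro i
    by_cases h : i + 1 ≤ N
    · have hk := hkaplow (i + 1) (by omega) h
      rw [show i + 1 - 1 = i from rfl] at hk
      have hc := hclow i (by omega)
      have h1 := (hlm (i + 1)).1
      omega
    · have h1 := hmu0 (i + 1) (by omega)
      have h2 := hnu0 (i + 1) (by omega)
      have h3 := hlam0 (i + 1) (by omega)
      have h4 := hkaphigh (i + 1) (by omega)
      have h5 := hchigh (i + 1) (by omega)
      have h6 := hchigh i (by omega)
      omega
  have rel4 : ∀ i, 0 < c i → kap (i + 1) = lam i := by
    intro i hci
    by_cases h : i + 1 ≤ N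
    · have hk := hkaplow (i + 1) (by omega) h
      rw [show i + 1 - 1 = i from rfl] at hk
      have hc := hclow i (by omega)
      omega
    · rw [hkaphigh (i + 1) (by omega), hlam0 i (by omega)]
  refine ⟨⟨fun i => le_trans (hkle i) (le_trans (hlm i).1 (hkge_mu i)),
      ⟨N + 1, fun i hi => hkaphigh i (by omega)⟩⟩,
    fun i => ⟨hkge_mu i, le_trans (hkle i) (hlm i).1⟩,
    fun i => ⟨hkge_nu i, le_trans (hkle i) (hln i).1⟩,
    ⟨rel0, relS, hkle, rel4, ⟨N, hchigh⟩⟩, ?_⟩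
  intro N' c' kap' hN' hmuN' hnuN' hc'high hc'low hkap0' hkap'low hkap'high
  have hmu0' : ∀ i, N' ≤ i → mu i = 0 := evzero_aux mu hmu.1 N' hmuN'
  have hnu0' : ∀ i, N' ≤ i → nu i = 0 := evzero_aux nu hnu.1 N' hnuN'
  have hlam0' : ∀ i, N' ≤ i → lam i = 0 := by
    intro i hi
    have h1 := (hlm i).1
    have h2 := hmu0' i hi
    omega
  have hcc : ∀ d i, max N N' ≤ i + d → c' i = c i := by
    intro d
    induction d with
    | zero =>
      intro i hi
      rw [hc'high i (by omega), hchigh i (by omega)]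
    | succ d ih =>
      intro i hi
      by_cases hM : max N N' ≤ i
      · rw [hc'high i (by omega), hchigh i (by omega)]
      · have hnext := ih (i + 1) (by omega)
        by_cases h1 : i < N
        · by_cases h2 : i < N'
          · rw [hc'low i h2, hclow i h1, hnext]
          · -- N' ≤ i < N
            have e1 := hmu0' (i + 1) (by omega)
            have e2 := hnu0' (i + 1) (by omega)
            have e3 := hlam0' (i + 1) (by omega)
            have e4 := hlam0' i (by omega)
            have e5 := hc'high i (by omega)
            have e6 := hc'high (i + 1) (by omega)
            have e7 := hclow i h1
            omega
        · -- N ≤ i < N'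
          have h2 : i < N' := by omega
          have e1 := hmu0 (i + 1) (by omega)
          have e2 := hnu0 (i + 1) (by omega)
          have e3 := hlam0 (i + 1) (by omega)
          have e4 := hlam0 i (by omega)
          have e5 := hchigh i (by omega)
          have e6 := hchigh (i + 1) (by omega)
          have e7 := hc'low i h2
          omega
  have hcc' : ∀ i, c' i = c i := fun i => hcc (max N N') i (by omega)
  funext i
  match i with
  | 0 => rw [hkap0', hkap0, hcc' 0]
  | j + 1 =>
    by_cases h1 : j + 1 ≤ N
    · by_cases h2 : j + 1 ≤ N'
      · rw [hkap'low (j + 1) (by omega) h2, hkaplow (j + 1) (by omega) h1, hcc' (j + 1)]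
      · -- N' < j + 1 ≤ N
        rw [hkap'high (j + 1) (by omega)]
        have hk := hkaplow (j + 1) (by omega) h1
        rw [show j + 1 - 1 = j from rfl] at hk
        have e1 := hmu0' (j + 1) (by omega)
        have e2 := hnu0' (j + 1) (by omega)
        have e3 := hlam0' (j + 1) (by omega)
        have e4 := hlam0' j (by omega)
        omega
    · by_cases h2 : j + 1 ≤ N'
      · rw [hkaphigh (j + 1) (by omega)]
        have hk := hkap'low (j + 1) (by omega) h2
        rw [show j + 1 - 1 = j from rfl] at hk
        have e1 := hmu0 (j + 1) (by omega)
        have e2 := hnu0 (j + 1) (by omega)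
        have e3 := hlam0 (j + 1) (by omega)
        have e4 := hlam0 j (by omega)
        omega
      · rw [hkap'high (j + 1) (by omega), hkaphigh (j + 1) (by omega)]
end

section
/- Correctness of the inverse algorithm for the Burge shape datum. Let μ, ν, κ be partitions with μ ≤ₕ κ and ν ≤ₕ κ. Define recursively (computing in ℤ): c(−1) := 0 and, for each i ∈ ℕ in increasing order: d i := μ i + ν i − κ i − c (i−1), λ i := max(d i, κ (i+1)), and c i := λ i − d i. Then every c i is a nonnegative integer, λ is a partition satisfying λ ≤ₕ μ and λ ≤ₕ ν, the sequence c is eventually constant with some value m ∈ ℕ, and the pair (κ, c) satisfies the Burge relations for (λ, μ, ν, m). -/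
/-- Correctness of the inverse algorithm for the Burge shape datum. -/
theorem burge_inverse_algorithm_correct (mu nu kap : ℕ → ℕ)
    (hmu : IsPartition mu) (hnu : IsPartition nu) (hkap : IsPartition kap)
    (hmk : HStrip mu kap) (hnk : HStrip nu kap)
    (c d lam : ℕ → ℤ)
    (hd0 : d 0 = (mu 0 : ℤ) + nu 0 - kap 0)
    (hdsucc : ∀ i, d (i + 1) = (mu (i + 1) : ℤ) + nu (i + 1) - kap (i + 1) - c i)
    (hlamdef : ∀ i, lam i = max (d i) ((kap (i + 1) : ℤ)))
    (hcdef : ∀ i, c i = lam i - d i) :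
    (∀ i, 0 ≤ c i) ∧
    ∃ lamN cN : ℕ → ℕ, ∃ m : ℕ,
      (∀ i, (lamN i : ℤ) = lam i) ∧ (∀ i, (cN i : ℤ) = c i) ∧
      IsPartition lamN ∧ HStrip lamN mu ∧ HStrip lamN nu ∧
      BurgeRel lamN mu nu m kap cN := by
  -- basic nonnegativity
  have hc0 : ∀ i, 0 ≤ c i := by
    intro i
    rw [hcdef i, hlamdef i]
    have := le_max_left (d i) ((kap (i + 1) : ℤ))
    linarith
  have hlam_nonneg : ∀ i, 0 ≤ lam i := by
    intro i
    rw [hlamdef i]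
    exact le_trans (by positivity) (le_max_right _ _)
  -- d i ≤ mu i and d i ≤ nu i
  have hd_le_mu : ∀ i, d i ≤ (mu i : ℤ) := by
    intro i
    cases i with
    | zero =>
      have h := (hnk 0).1
      rw [hd0]
      have : (nu 0 : ℤ) ≤ kap 0 := by exact_mod_cast h
      linarith
    | succ n =>
      have h := (hnk (n + 1)).1
      have h' : (nu (n + 1) : ℤ) ≤ kap (n + 1) := by exact_mod_cast h
      have := hc0 n
      rw [hdsucc n]; linarith
  have hd_le_nu : ∀ i, d i ≤ (nu i : ℤ) := by
    intro i
    cases i with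
    | zero =>
      have h := (hmk 0).1
      rw [hd0]
      have : (mu 0 : ℤ) ≤ kap 0 := by exact_mod_cast h
      linarith
    | succ n =>
      have h := (hmk (n + 1)).1
      have h' : (mu (n + 1) : ℤ) ≤ kap (n + 1) := by exact_mod_cast h
      have := hc0 n
      rw [hdsucc n]; linarith
  -- lam i ≤ mu i, lam i ≤ nu i
  have hlam_le_mu : ∀ i, lam i ≤ (mu i : ℤ) := by
    intro i
    rw [hlamdef i]
    exact max_le (hd_le_mu i) (by exact_mod_cast (hmk i).2)
  have hlam_le_nu : ∀ i, lam i ≤ (nu i : ℤ) := by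
    intro i
    rw [hlamdef i]
    exact max_le (hd_le_nu i) (by exact_mod_cast (hnk i).2)
  -- mu (i+1) ≤ lam i, nu (i+1) ≤ lam i
  have hkap_le_lam : ∀ i, (kap (i + 1) : ℤ) ≤ lam i := by
    intro i; rw [hlamdef i]; exact le_max_right _ _
  have hmu_le_lam : ∀ i, (mu (i + 1) : ℤ) ≤ lam i := by
    intro i
    exact le_trans (by exact_mod_cast (hmk (i + 1)).1) (hkap_le_lam i)
  have hnu_le_lam : ∀ i, (nu (i + 1) : ℤ) ≤ lam i := by
    intro i
    exact le_trans (by exact_mod_cast (hnk (i + 1)).1) (hkap_le_lam i)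
  -- lam is decreasing
  have hlam_dec : ∀ i, lam (i + 1) ≤ lam i :=
    fun i => le_trans (hlam_le_mu (i + 1)) (hmu_le_lam i)
  -- eventual vanishing
  obtain ⟨Nm, hNm⟩ := hmu.2
  obtain ⟨Nn, hNn⟩ := hnu.2
  obtain ⟨Nk, hNk⟩ := hkap.2
  set N := max (max Nm Nn) Nk with hN
  have hzero : ∀ i, N ≤ i → mu i = 0 ∧ nu i = 0 ∧ kap i = 0 := by
    intro i hi
    exact ⟨hNm i (le_trans (le_trans (le_max_left _ _) (le_max_left _ _)) hi),
      hNn i (le_trans (le_trans (le_max_right _ _) (le_max_left _ _)) hi),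
      hNk i (le_trans (le_max_right _ _) hi)⟩
  have hlam_zero : ∀ i, N + 1 ≤ i → lam i = 0 := by
    intro i hi
    obtain ⟨j, rfl⟩ : ∃ j, i = j + 1 := ⟨i - 1, by omega⟩
    obtain ⟨h1, h2, h3⟩ := hzero (j + 1) (by omega)
    obtain ⟨h1', h2', h3'⟩ := hzero (j + 2) (by omega)
    have hd : d (j + 1) = -(c j) := by rw [hdsucc j, h1, h2, h3]; push_cast; ring
    rw [hlamdef (j + 1), h3']
    have := hc0 j
    simp only [Nat.cast_zero]
    omega
  have hc_const : ∀ i, N + 1 ≤ i → c i = c (N + 1) := by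
    intro i hi
    induction i with
    | zero => omega
    | succ n ih =>
      rcases Nat.lt_or_ge (N + 1) (n + 1) with h | h
      · have hn : N + 1 ≤ n := by omega
        rw [← ih hn]
        obtain ⟨h1, h2, h3⟩ := hzero (n + 1) (by omega)
        have hd : d (n + 1) = -(c n) := by rw [hdsucc n, h1, h2, h3]; push_cast; ring
        rw [hcdef (n + 1), hlam_zero (n + 1) (by omega), hd]; ring
      · have : n + 1 = N + 1 := by omega
        rw [this]
  refine ⟨hc0, fun i => (lam i).toNat, fun i => (c i).toNat, (c (N + 1)).toNat, ?_, ?_, ?_, ?_, ?_, ?_⟩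
  · exact fun i => Int.toNat_of_nonneg (hlam_nonneg i)
  · exact fun i => Int.toNat_of_nonneg (hc0 i)
  · constructor
    · intro i
      beta_reduce
      have := hlam_dec i
      have := hlam_nonneg (i + 1)
      omega
    · exact ⟨N + 1, fun i hi => by beta_reduce; rw [hlam_zero i hi]; rfl⟩
  · intro i
    beta_reduce
    constructor
    · have := hlam_le_mu i; have := hlam_nonneg i; omega
    · have := hmu_le_lam i; have := hlam_nonneg i; omega
  · intro i
    beta_reduce
    constructor
    · have := hlam_le_nu i; have := hlam_nonneg i; omega
    · have := hnu_le_lam i; have := hlam_nonneg i; omega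
  · refine ⟨?_, ?_, ?_, ?_, ⟨N + 1, ?_⟩⟩
    · beta_reduce
      have h1 := hcdef 0
      have := hc0 0; have := hlam_nonneg 0
      rw [hd0] at h1
      omega
    · intro i
      beta_reduce
      have h1 := hcdef (i + 1)
      rw [hdsucc i] at h1
      have := hc0 (i + 1); have := hc0 i
      have := hlam_nonneg (i + 1)
      omega
    · intro i
      beta_reduce
      have := hkap_le_lam i; have := hlam_nonneg i; omega
    · intro i hpos
      beta_reduce at hpos ⊢
      have hpos' : 0 < c i := by omega
      have hlt : d i < (kap (i + 1) : ℤ) := by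
        by_contra h
        push_neg at h
        rw [hcdef i, hlamdef i, max_eq_left h] at hpos'
        omega
      have : lam i = (kap (i + 1) : ℤ) := by
        rw [hlamdef i, max_eq_right (le_of_lt hlt)]
      omega
    · intro i hi
      beta_reduce
      rw [hc_const i hi]
end

section
/- The Burge shape datum is a bijection. Fix partitions μ and ν. The assignment sending a pair (λ, m), where λ is a partition with λ ≤ₕ μ and λ ≤ₕ ν and m ∈ ℕ, to the unique partition κ for which some c : ℕ → ℕ makes (κ, c) satisfy the Burge relations for (λ, μ, ν, m), is a bijection from the set {(λ, m) : λ a partition with λ ≤ₕ μ and λ ≤ₕ ν, m ∈ ℕ} onto the set {κ : κ a partition with μ ≤ₕ κ and ν ≤ₕ κ}. -/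
namespace BurgeAux


theorem c_unique {lam mu nu : ℕ → ℕ} {m : ℕ} {kap c kap' c' : ℕ → ℕ}
    (h : BurgeRel lam mu nu m kap c) (h' : BurgeRel lam mu nu m kap' c') :
    ∀ i, c i = c' i := by
  obtain ⟨h1, h2, h3, h4, N, hN⟩ := h
  obtain ⟨h1', h2', h3', h4', N', hN'⟩ := h'
  have key : ∀ j i, max N N' ≤ i + j → c i = c' i := by
    intro j
    induction j with
    | zero =>
      intro i hi
      rw [hN i (by omega), hN' i (by omega)]
    | succ j ih =>
      intro i hi
      by_cases hc : max N N' ≤ i + j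
      · exact ih i hc
      · have hcc : c (i + 1) = c' (i + 1) := ih (i + 1) (by omega)
        have e1 := h2 i
        have e2 := h2' i
        by_contra hne
        rcases Nat.lt_or_ge (c i) (c' i) with hlt | hge
        · have := h4' i (by omega)
          have := h3 i
          omega
        · have := h4 i (by omega)
          have := h3' i
          omega
  intro i
  exact key (max N N') i (by omega)

theorem kap_unique {lam mu nu : ℕ → ℕ} {m : ℕ} {kap c kap' c' : ℕ → ℕ}
    (h : BurgeRel lam mu nu m kap c) (h' : BurgeRel lam mu nu m kap' c') :
    kap = kap' := by
  have hc := c_unique h h'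
  funext i
  cases i with
  | zero =>
    have := h.1; have := h'.1; have := hc 0; omega
  | succ i =>
    have := h.2.1 i; have := h'.2.1 i; have := hc i; have := hc (i + 1); omega

theorem inv_unique {lam lam' mu nu : ℕ → ℕ} {m m' : ℕ} {kap c c' : ℕ → ℕ}
    (h : BurgeRel lam mu nu m kap c) (h' : BurgeRel lam' mu nu m' kap c') :
    lam = lam' ∧ m = m' := by
  obtain ⟨h1, h2, h3, h4, N, hN⟩ := h
  obtain ⟨h1', h2', h3', h4', N', hN'⟩ := h'
  have key : ∀ i, c i = c' i ∧ lam i = lam' i := by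
    intro i
    induction i with
    | zero =>
      have hc : c 0 = c' 0 := by
        by_contra hne
        rcases Nat.lt_or_ge (c 0) (c' 0) with hlt | hge
        · have := h4' 0 (by omega); have := h3 0; omega
        · have := h4 0 (by omega); have := h3' 0; omega
      exact ⟨hc, by omega⟩
    | succ i ih =>
      have e1 := h2 i
      have e2 := h2' i
      have hc : c (i + 1) = c' (i + 1) := by
        by_contra hne
        rcases Nat.lt_or_ge (c (i + 1)) (c' (i + 1)) with hlt | hge
        · have := h4' (i + 1) (by omega); have := h3 (i + 1); omega
        · have := h4 (i + 1) (by omega); have := h3' (i + 1); omega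
      exact ⟨hc, by omega⟩
  refine ⟨funext fun i => (key i).2, ?_⟩
  have := hN (max N N') (by omega)
  have := hN' (max N N') (by omega)
  have := (key (max N N')).1
  omega



/-- backward auxiliary sequence: `bseq j` is `c (N - j)`. -/
def bseq (lam mu nu : ℕ → ℕ) (m N : ℕ) : ℕ → ℕ
  | 0 => m
  | j + 1 => bseq lam mu nu m N j + mu (N - j) + nu (N - j) - (lam (N - j) + lam (N - j - 1))

def cF (lam mu nu : ℕ → ℕ) (m N : ℕ) (i : ℕ) : ℕ :=
  if N ≤ i then m else bseq lam mu nu m N (N - i)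

def kF (lam mu nu : ℕ → ℕ) (m N : ℕ) : ℕ → ℕ
  | 0 => cF lam mu nu m N 0 + mu 0 + nu 0 - lam 0
  | i + 1 => cF lam mu nu m N (i + 1) + mu (i + 1) + nu (i + 1) -
      (lam (i + 1) + cF lam mu nu m N i)

theorem cF_eq_b {lam mu nu : ℕ → ℕ} {m N i : ℕ} (hi : i < N) :
    cF lam mu nu m N (i + 1) = bseq lam mu nu m N (N - i - 1) := by
  rcases eq_or_lt_of_le (Nat.succ_le_of_lt hi) with h | h
  · have : N - i - 1 = 0 := by omega
    rw [this]
    simp [cF, ← h, bseq]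
  · have : ¬ N ≤ i + 1 := by omega
    rw [cF, if_neg this]
    congr 1

theorem cF_rec {lam mu nu : ℕ → ℕ} {m N : ℕ}
    (hz : ∀ i, N ≤ i → lam i = 0 ∧ mu i = 0 ∧ nu i = 0) (i : ℕ) :
    cF lam mu nu m N i =
      cF lam mu nu m N (i + 1) + mu (i + 1) + nu (i + 1) - (lam (i + 1) + lam i) := by
  by_cases hNi : N ≤ i
  · have a1 := hz i hNi
    have a2 := hz (i + 1) (by omega)
    rw [cF, if_pos hNi, cF, if_pos (by omega : N ≤ i + 1), a1.1, a2.1, a2.2.1, a2.2.2]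
    omega
  · have hi : i < N := Nat.lt_of_not_le hNi
    rw [cF, if_neg hNi, show N - i = (N - i - 1) + 1 by omega, bseq,
      ← cF_eq_b hi, show N - (N - i - 1) = i + 1 by omega,
      show i + 1 - 1 = i from rfl]

theorem exists_kap {mu nu : ℕ → ℕ} (hmu : IsPartition mu) (hnu : IsPartition nu)
    {lam : ℕ → ℕ} (m : ℕ) (hlam : IsPartition lam) (s1 : HStrip lam mu) (s2 : HStrip lam nu) :
    ∃ kap c, IsPartition kap ∧ HStrip mu kap ∧ HStrip nu kap ∧ BurgeRel lam mu nu m kap c := by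
  obtain ⟨_, Nl, hNl⟩ := hlam
  obtain ⟨_, Nm, hNm⟩ := hmu
  obtain ⟨_, Nn, hNn⟩ := hnu
  set N := Nl + Nm + Nn with hNdef
  have hz : ∀ i, N ≤ i → lam i = 0 ∧ mu i = 0 ∧ nu i = 0 := fun i hi =>
    ⟨hNl i (by omega), hNm i (by omega), hNn i (by omega)⟩
  set c := cF lam mu nu m N with hc
  set kap := kF lam mu nu m N with hk
  have crec : ∀ i, c i = c (i + 1) + mu (i + 1) + nu (i + 1) - (lam (i + 1) + lam i) :=
    cF_rec hz
  have cN : ∀ i, N ≤ i → c i = m := fun i hi => if_pos hi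
  have k0 : kap 0 = c 0 + mu 0 + nu 0 - lam 0 := rfl
  have ks : ∀ i, kap (i + 1) = c (i + 1) + mu (i + 1) + nu (i + 1) - (lam (i + 1) + c i) :=
    fun i => rfl
  have key : ∀ i, kap (i + 1) + (lam (i + 1) + c i) = c (i + 1) + mu (i + 1) + nu (i + 1)
      ∧ kap (i + 1) ≤ lam i ∧ (0 < c i → kap (i + 1) = lam i) := by
    intro i
    have hcr := crec i
    have hkr := ks i
    have hs1 := (s1 (i + 1)).1
    omega
  have rel1 : c 0 + mu 0 + nu 0 = lam 0 + kap 0 := by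
    have := (s1 0).1; omega
  have mn_le_kap : ∀ i, mu i ≤ kap i ∧ nu i ≤ kap i := by
    intro i
    cases i with
    | zero => have := (s1 0).1; have := (s2 0).1; omega
    | succ i =>
      have hkey := (key i).1
      have := (key i).2.2
      rcases Nat.eq_zero_or_pos (c i) with h0 | h0
      · have := (s1 (i + 1)).1; have := (s2 (i + 1)).1; omega
      · have := this h0; have := (s1 i).2; have := (s2 i).2; omega
  refine ⟨kap, c, ⟨?_, N + 1, ?_⟩, ?_, ?_, rel1, fun i => by have := (key i).1; omega,
    fun i => (key i).2.1, fun i => (key i).2.2, N, cN⟩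
  · intro i
    have := (mn_le_kap i).1
    have := (key i).2.1
    have := (s1 i).1
    omega
  · intro i hi
    obtain ⟨j, rfl⟩ : ∃ j, i = j + 1 := ⟨i - 1, by omega⟩
    have := (key j).2.1
    have := (hz j (by omega)).1
    omega
  · intro i
    refine ⟨(mn_le_kap i).1, ?_⟩
    have := (key i).2.1
    have := (s1 i).1
    omega
  · intro i
    refine ⟨(mn_le_kap i).2, ?_⟩
    have := (key i).2.1
    have := (s2 i).1
    omega



/-- forward auxiliary sequence for the inverse direction. -/
def cG (mu nu kap : ℕ → ℕ) : ℕ → ℕ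
  | 0 => kap 0 + kap 1 - (mu 0 + nu 0)
  | i + 1 => cG mu nu kap i + kap (i + 1) + kap (i + 2) - (mu (i + 1) + nu (i + 1))

def lG (mu nu kap : ℕ → ℕ) : ℕ → ℕ
  | 0 => cG mu nu kap 0 + mu 0 + nu 0 - kap 0
  | i + 1 => cG mu nu kap (i + 1) + mu (i + 1) + nu (i + 1) - (kap (i + 1) + cG mu nu kap i)

theorem exists_lam {mu nu : ℕ → ℕ} (hmu : IsPartition mu) (hnu : IsPartition nu)
    {kap : ℕ → ℕ} (hkap : IsPartition kap) (s1 : HStrip mu kap) (s2 : HStrip nu kap) :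
    ∃ lam m c, IsPartition lam ∧ HStrip lam mu ∧ HStrip lam nu ∧
      BurgeRel lam mu nu m kap c := by
  obtain ⟨_, Nm, hNm⟩ := hmu
  obtain ⟨_, Nn, hNn⟩ := hnu
  obtain ⟨_, Nk, hNk⟩ := hkap
  set N := Nm + Nn + Nk with hNdef
  have hz : ∀ i, N ≤ i → mu i = 0 ∧ nu i = 0 ∧ kap i = 0 := fun i hi =>
    ⟨hNm i (by omega), hNn i (by omega), hNk i (by omega)⟩
  set c := cG mu nu kap with hc
  set lam := lG mu nu kap with hl
  set m := c N with hm
  have cstab : ∀ i, N ≤ i → c i = m := by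
    have : ∀ j, c (N + j) = m := by
      intro j
      induction j with
      | zero => rfl
      | succ j ih =>
        have h1 := (hz (N + j + 1) (by omega))
        have h2 := (hz (N + j + 2) (by omega))
        have : c (N + (j + 1)) = c (N + j) + kap (N + j + 1) + kap (N + j + 2) -
            (mu (N + j + 1) + nu (N + j + 1)) := rfl
        omega
    intro i hi
    have := this (i - N)
    rwa [show N + (i - N) = i by omega] at this
  have c0 : c 0 = kap 0 + kap 1 - (mu 0 + nu 0) := rfl
  have cs : ∀ i, c (i + 1) = c i + kap (i + 1) + kap (i + 2) - (mu (i + 1) + nu (i + 1)) :=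
    fun i => rfl
  have l0 : lam 0 = c 0 + mu 0 + nu 0 - kap 0 := rfl
  have ls : ∀ i, lam (i + 1) = c (i + 1) + mu (i + 1) + nu (i + 1) - (kap (i + 1) + c i) :=
    fun i => rfl
  -- index-0 facts
  have key0 : c 0 + mu 0 + nu 0 = lam 0 + kap 0 ∧ lam 0 ≤ mu 0 ∧ lam 0 ≤ nu 0 ∧
      kap 1 ≤ lam 0 ∧ (0 < c 0 → kap 1 = lam 0) := by
    have h1 : mu 0 ≤ kap 0 := (s1 0).1
    have h2 : kap 1 ≤ mu 0 := (s1 0).2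
    have h3 : nu 0 ≤ kap 0 := (s2 0).1
    have h4 : kap 1 ≤ nu 0 := (s2 0).2
    omega
  have keys : ∀ i, c (i + 1) + mu (i + 1) + nu (i + 1) = lam (i + 1) + kap (i + 1) + c i ∧
      lam (i + 1) ≤ mu (i + 1) ∧ lam (i + 1) ≤ nu (i + 1) ∧
      kap (i + 2) ≤ lam (i + 1) ∧ (0 < c (i + 1) → kap (i + 2) = lam (i + 1)) := by
    intro i
    have e1 := cs i
    have e2 := ls i
    have h1 : mu (i + 1) ≤ kap (i + 1) := (s1 (i + 1)).1
    have h2 : kap (i + 2) ≤ mu (i + 1) := (s1 (i + 1)).2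
    have h3 : nu (i + 1) ≤ kap (i + 1) := (s2 (i + 1)).1
    have h4 : kap (i + 2) ≤ nu (i + 1) := (s2 (i + 1)).2
    omega
  have lam_le_mu : ∀ i, lam i ≤ mu i := by
    intro i; cases i with
    | zero => exact key0.2.1
    | succ i => exact (keys i).2.1
  have lam_le_nu : ∀ i, lam i ≤ nu i := by
    intro i; cases i with
    | zero => exact key0.2.2.1
    | succ i => exact (keys i).2.2.1
  have kap_le_lam : ∀ i, kap (i + 1) ≤ lam i := by
    intro i; cases i with
    | zero => exact key0.2.2.2.1
    | succ i => exact (keys i).2.2.2.1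
  have kap_eq_lam : ∀ i, 0 < c i → kap (i + 1) = lam i := by
    intro i; cases i with
    | zero => exact key0.2.2.2.2
    | succ i => exact (keys i).2.2.2.2
  refine ⟨lam, m, c, ⟨?_, N, ?_⟩, ?_, ?_, key0.1, fun i => (keys i).1,
    kap_le_lam, kap_eq_lam, N, cstab⟩
  · intro i
    have := lam_le_mu (i + 1)
    have := (s1 i).2
    have := kap_le_lam i
    have := (s1 (i + 1)).1
    omega
  · intro i hi
    have := lam_le_mu i
    have := (hz i hi).1
    omega
  · intro i
    refine ⟨lam_le_mu i, ?_⟩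
    have := kap_le_lam i
    have := (s1 (i + 1)).1
    omega
  · intro i
    refine ⟨lam_le_nu i, ?_⟩
    have := kap_le_lam i
    have := (s2 (i + 1)).1
    omega


end BurgeAux

/-- The Burge shape datum is a bijection. -/
theorem burge_shape_datum_bijective (mu nu : ℕ → ℕ)
    (hmu : IsPartition mu) (hnu : IsPartition nu) :
    ∃ F : (ℕ → ℕ) × ℕ → (ℕ → ℕ),
      (∀ lam m, IsPartition lam → HStrip lam mu → HStrip lam nu →
        (IsPartition (F (lam, m)) ∧ (∃ c, BurgeRel lam mu nu m (F (lam, m)) c) ∧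
         ∀ kap c, IsPartition kap → BurgeRel lam mu nu m kap c → kap = F (lam, m))) ∧
      Set.BijOn F
        {p : (ℕ → ℕ) × ℕ | IsPartition p.1 ∧ HStrip p.1 mu ∧ HStrip p.1 nu}
        {kap : ℕ → ℕ | IsPartition kap ∧ HStrip mu kap ∧ HStrip nu kap} := by
  classical
  refine ⟨fun p =>
    if h : ∃ kap c, IsPartition kap ∧ HStrip mu kap ∧ HStrip nu kap ∧
        BurgeRel p.1 mu nu p.2 kap c
    then h.choose else fun _ => 0, ?_, ?_, ?_, ?_⟩
  · intro lam m hlam hs1 hs2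
    have h : ∃ kap c, IsPartition kap ∧ HStrip mu kap ∧ HStrip nu kap ∧
        BurgeRel lam mu nu m kap c := BurgeAux.exists_kap hmu hnu m hlam hs1 hs2
    simp only [dif_pos h]
    obtain ⟨c, hp, hsm, hsn, hb⟩ := h.choose_spec
    exact ⟨hp, ⟨c, hb⟩, fun kap' c' _ hb' => BurgeAux.kap_unique hb' hb⟩
  · rintro ⟨lam, m⟩ ⟨hlam, hs1, hs2⟩
    have h : ∃ kap c, IsPartition kap ∧ HStrip mu kap ∧ HStrip nu kap ∧
        BurgeRel lam mu nu m kap c := BurgeAux.exists_kap hmu hnu m hlam hs1 hs2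
    simp only [dif_pos h]
    obtain ⟨c, hp, hsm, hsn, hb⟩ := h.choose_spec
    exact ⟨hp, hsm, hsn⟩
  · rintro ⟨lam, m⟩ ⟨hlam, hs1, hs2⟩ ⟨lam', m'⟩ ⟨hlam', hs1', hs2'⟩ heq
    have h : ∃ kap c, IsPartition kap ∧ HStrip mu kap ∧ HStrip nu kap ∧
        BurgeRel lam mu nu m kap c := BurgeAux.exists_kap hmu hnu m hlam hs1 hs2
    have h' : ∃ kap c, IsPartition kap ∧ HStrip mu kap ∧ HStrip nu kap ∧
        BurgeRel lam' mu nu m' kap c := BurgeAux.exists_kap hmu hnu m' hlam' hs1' hs2'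
    simp only [dif_pos h, dif_pos h'] at heq
    obtain ⟨c, hp, hsm, hsn, hb⟩ := h.choose_spec
    obtain ⟨c', hp', hsm', hsn', hb'⟩ := h'.choose_spec
    rw [heq] at hb
    obtain ⟨e1, e2⟩ := BurgeAux.inv_unique hb hb'
    simp only [Prod.mk.injEq]
    exact ⟨e1, e2⟩
  · rintro kap ⟨hkap, hsm, hsn⟩
    obtain ⟨lam, m, c, hlam, hs1, hs2, hb⟩ := BurgeAux.exists_lam hmu hnu hkap hsm hsn
    refine ⟨(lam, m), ⟨hlam, hs1, hs2⟩, ?_⟩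
    have h : ∃ kap' c', IsPartition kap' ∧ HStrip mu kap' ∧ HStrip nu kap' ∧
        BurgeRel lam mu nu m kap' c' := ⟨kap, c, hkap, hsm, hsn, hb⟩
    simp only [dif_pos h]
    obtain ⟨c', hp', hsm', hsn', hb'⟩ := h.choose_spec
    exact BurgeAux.kap_unique hb' hb
end

section
/- The RSK shape datum formulas produce a valid shape. Let λ, μ, ν be partitions with λ ≤ₕ μ and λ ≤ₕ ν, and let m ∈ ℕ. Define κ : ℕ → ℕ by κ 0 := m + max(μ 0, ν 0) and κ (i+1) := min(μ i, ν i) − λ i + max(μ (i+1), ν (i+1)) for all i ∈ ℕ. Then κ is a partition satisfying μ ≤ₕ κ, ν ≤ₕ κ, and |κ| = |μ| + |ν| − |λ| + m. -/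
/-- The RSK shape datum formulas produce a valid shape. -/
theorem rsk_shape_datum_valid (lam mu nu : ℕ → ℕ)
    (hlam : IsPartition lam) (hmu : IsPartition mu) (hnu : IsPartition nu)
    (hlm : HStrip lam mu) (hln : HStrip lam nu) (m : ℕ) (kap : ℕ → ℕ)
    (hk0 : kap 0 = m + max (mu 0) (nu 0))
    (hks : ∀ i, kap (i + 1) =
      min (mu i) (nu i) - lam i + max (mu (i + 1)) (nu (i + 1))) :
    IsPartition kap ∧ HStrip mu kap ∧ HStrip nu kap ∧
    psize kap + psize lam = psize mu + psize nu + m := by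
  obtain ⟨hlamd, Nl, hNl⟩ := hlam
  obtain ⟨hmud, Nm, hNm⟩ := hmu
  obtain ⟨hnud, Nn, hNn⟩ := hnu
  have hlmin : ∀ i, lam i ≤ min (mu i) (nu i) := fun i => le_min (hlm i).1 (hln i).1
  have hmaxl : ∀ i, max (mu (i+1)) (nu (i+1)) ≤ lam i := fun i => max_le (hlm i).2 (hln i).2
  have hkadd : ∀ i, kap (i+1) + lam i = min (mu i) (nu i) + max (mu (i+1)) (nu (i+1)) := by
    intro i; have := hlmin i; rw [hks i]; omega
  set K := max Nl (max Nm Nn) with hK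
  have hz : ∀ i, K ≤ i → lam i = 0 ∧ mu i = 0 ∧ nu i = 0 := by
    intro i hi
    exact ⟨hNl i (le_trans (le_max_left _ _) hi),
      hNm i (le_trans (le_trans (le_max_left _ _) (le_max_right _ _)) hi),
      hNn i (le_trans (le_trans (le_max_right _ _) (le_max_right _ _)) hi)⟩
  have hkz : ∀ i, K + 1 ≤ i → kap i = 0 := by
    intro i hi
    obtain ⟨j, rfl⟩ : ∃ j, i = j + 1 := ⟨i - 1, by omega⟩
    obtain ⟨h1, h2, h3⟩ := hz j (by omega)
    obtain ⟨h4, h5, h6⟩ := hz (j+1) (by omega)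
    rw [hks j]; simp [h1, h2, h3, h4, h5, h6]
  have hmono : ∀ i, kap (i + 1) ≤ kap i := by
    intro i
    cases i with
    | zero =>
      have h1 := hkadd 0
      have h2 := hmaxl 0
      have h3 := hlmin 0
      have h4 : min (mu 0) (nu 0) ≤ max (mu 0) (nu 0) := min_le_max
      omega
    | succ j =>
      have h1 := hkadd j
      have h2 := hkadd (j+1)
      have h3 := hmaxl (j+1)
      have h4 := hlmin (j+1)
      have h5 := hlmin j
      have h6 : min (mu (j+1)) (nu (j+1)) ≤ max (mu (j+1)) (nu (j+1)) := min_le_max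
      omega
  have hpart : IsPartition kap := ⟨hmono, K + 1, hkz⟩
  have hstrips : HStrip mu kap ∧ HStrip nu kap := by
    constructor <;> intro i <;> constructor
    · cases i with
      | zero => have := le_max_left (mu 0) (nu 0); omega
      | succ j =>
        have := hks j
        have h2 : mu (j+1) ≤ max (mu (j+1)) (nu (j+1)) := le_max_left _ _
        omega
    · have h1 := hkadd i
      have h2 := hmaxl i
      have h3 : min (mu i) (nu i) ≤ mu i := min_le_left _ _
      omega
    · cases i with
      | zero => have := le_max_right (mu 0) (nu 0); omega
      | succ j =>
        have := hks j
        have h2 : nu (j+1) ≤ max (mu (j+1)) (nu (j+1)) := le_max_right _ _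
        omega
    · have h1 := hkadd i
      have h2 := hmaxl i
      have h3 : min (mu i) (nu i) ≤ nu i := min_le_right _ _
      omega
  refine ⟨hpart, hstrips.1, hstrips.2, ?_⟩
  set n := K + 1 with hn
  have hfs : ∀ f : ℕ → ℕ, (∀ i, n + 1 ≤ i → f i = 0) →
      psize f = ∑ i ∈ Finset.range (n+1), f i := by
    intro f hf
    apply finsum_eq_finset_sum_of_support_subset
    intro x hx
    simp only [Finset.coe_range, Set.mem_Iio]
    by_contra h
    exact hx (hf x (by omega))
  rw [hfs kap (fun i hi => hkz i (by omega)),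
      hfs lam (fun i hi => (hz i (by omega)).1),
      hfs mu (fun i hi => (hz i (by omega)).2.1),
      hfs nu (fun i hi => (hz i (by omega)).2.2)]
  have e1 : ∑ i ∈ Finset.range (n+1), kap i
      = ∑ i ∈ Finset.range n, kap (i+1) + kap 0 := Finset.sum_range_succ' kap n
  have e2 : ∑ i ∈ Finset.range (n+1), lam i
      = ∑ i ∈ Finset.range n, lam i + lam n := Finset.sum_range_succ lam n
  have hlamn : lam n = 0 := (hz n (by omega)).1
  have e3 : ∑ i ∈ Finset.range n, kap (i+1) + ∑ i ∈ Finset.range n, lam i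
      = ∑ i ∈ Finset.range n, min (mu i) (nu i)
        + ∑ i ∈ Finset.range n, max (mu (i+1)) (nu (i+1)) := by
    rw [← Finset.sum_add_distrib, ← Finset.sum_add_distrib]
    exact Finset.sum_congr rfl (fun i _ => hkadd i)
  have e4 : ∑ i ∈ Finset.range (n+1), max (mu i) (nu i)
      = ∑ i ∈ Finset.range n, max (mu (i+1)) (nu (i+1)) + max (mu 0) (nu 0) :=
    Finset.sum_range_succ' _ n
  have hminn : min (mu n) (nu n) = 0 := by
    have := (hz n (by omega)).2.1; omega
  have e5 : ∑ i ∈ Finset.range (n+1), min (mu i) (nu i)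
      = ∑ i ∈ Finset.range n, min (mu i) (nu i) + min (mu n) (nu n) :=
    Finset.sum_range_succ _ n
  have e6 : ∑ i ∈ Finset.range (n+1), min (mu i) (nu i)
      + ∑ i ∈ Finset.range (n+1), max (mu i) (nu i)
      = ∑ i ∈ Finset.range (n+1), mu i + ∑ i ∈ Finset.range (n+1), nu i := by
    rw [← Finset.sum_add_distrib, ← Finset.sum_add_distrib]
    exact Finset.sum_congr rfl (fun i _ => min_add_max (mu i) (nu i))
  omega
end

section
/- Inverse of the RSK shape datum formulas. Let μ, ν, κ be partitions with μ ≤ₕ κ and ν ≤ₕ κ. Define m := κ 0 − max(μ 0, ν 0) and λ i := min(μ i, ν i) + max(μ (i+1), ν (i+1)) − κ (i+1) for all i ∈ ℕ. Then m is a nonnegative integer, each λ i is a nonnegative integer, λ is a partition satisfying λ ≤ₕ μ and λ ≤ₕ ν, and applying the RSK shape datum formulas to (λ, μ, ν, m) — namely κ' 0 := m + max(μ 0, ν 0) and κ' (i+1) := min(μ i, ν i) − λ i + max(μ (i+1), ν (i+1)) — recovers κ' = κ. -/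
/-- Inverse of the RSK shape datum formulas. -/
theorem rsk_shape_datum_inverse (mu nu kap : ℕ → ℕ)
    (hmu : IsPartition mu) (hnu : IsPartition nu) (hkap : IsPartition kap)
    (hmk : HStrip mu kap) (hnk : HStrip nu kap)
    (m : ℤ) (lam : ℕ → ℤ)
    (hmdef : m = (kap 0 : ℤ) - max (mu 0) (nu 0))
    (hlamdef : ∀ i, lam i = (min (mu i) (nu i) : ℤ) +
      max (mu (i + 1)) (nu (i + 1)) - kap (i + 1)) :
    0 ≤ m ∧ (∀ i, 0 ≤ lam i) ∧
    ∃ lamN : ℕ → ℕ, ∃ mN : ℕ,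
      (∀ i, (lamN i : ℤ) = lam i) ∧ (mN : ℤ) = m ∧
      IsPartition lamN ∧ HStrip lamN mu ∧ HStrip lamN nu ∧
      kap 0 = mN + max (mu 0) (nu 0) ∧
      ∀ i, kap (i + 1) =
        min (mu i) (nu i) - lamN i + max (mu (i + 1)) (nu (i + 1)) := by
  obtain ⟨hmud, Nmu, hNmu⟩ := hmu
  obtain ⟨hnud, Nnu, hNnu⟩ := hnu
  obtain ⟨hkapd, Nkap, hNkap⟩ := hkap
  have h1 : ∀ i, mu i ≤ kap i := fun i => (hmk i).1
  have h2 : ∀ i, kap (i+1) ≤ mu i := fun i => (hmk i).2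
  have h3 : ∀ i, nu i ≤ kap i := fun i => (hnk i).1
  have h4 : ∀ i, kap (i+1) ≤ nu i := fun i => (hnk i).2
  have hm0 : 0 ≤ m := by
    rw [hmdef]; have := h1 0; have := h3 0; push_cast; omega
  have hl0 : ∀ i, 0 ≤ lam i := by
    intro i; rw [hlamdef i]
    have := h2 i; have := h4 i; push_cast; omega
  refine ⟨hm0, hl0, fun i => min (mu i) (nu i) + max (mu (i+1)) (nu (i+1)) - kap (i+1),
    kap 0 - max (mu 0) (nu 0), ?_, ?_, ⟨?_, ?_⟩, ?_, ?_, ?_, ?_⟩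
  · intro i
    rw [hlamdef i]
    have := h2 i; have := h4 i; have := h1 (i+1); have := h3 (i+1)
    push_cast; omega
  · rw [hmdef]; have := h1 0; have := h3 0; push_cast; omega
  · intro i
    beta_reduce
    simp only [show i+1+1 = i+2 from rfl]
    have := h2 i; have := h4 i; have := h2 (i+1); have := h4 (i+1)
    have := h1 (i+1); have := h3 (i+1); have := h1 (i+2); have := h3 (i+2)
    omega
  · refine ⟨max Nmu (max Nnu Nkap), fun i hi => ?_⟩
    have e1 := hNmu i (by omega)
    have e2 := hNnu i (by omega)
    have e3 := hNkap (i+1) (by omega)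
    have e4 := hNmu (i+1) (by omega)
    have e5 := hNnu (i+1) (by omega)
    beta_reduce
    omega
  · intro i
    beta_reduce
    have := h2 i; have := h4 i; have := h1 (i+1); have := h3 (i+1)
    constructor <;> omega
  · intro i
    beta_reduce
    have := h2 i; have := h4 i; have := h1 (i+1); have := h3 (i+1)
    constructor <;> omega
  · have := h1 0; have := h3 0; omega
  · intro i
    beta_reduce
    have := h2 i; have := h4 i; have := h1 (i+1); have := h3 (i+1)
    omega
end

section
/- Description of the intermediate shapes in the binary shape datum by obligatory and optional squares. Let μ, ν be partitions such that there exists at least one partition λ₀ with λ₀ ≤ᵥ μ and λ₀ ≤ₕ ν. Then for every partition λ, one has (λ ≤ᵥ μ and λ ≤ₕ ν) if and only if (cells(μ) ∩ cells(ν)) \ S(μ,ν) ⊆ cells(λ) ⊆ cells(μ) ∩ cells(ν). Moreover the map λ ↦ cells(λ) ∩ S(μ,ν) is a bijection from {λ : λ a partition with λ ≤ᵥ μ and λ ≤ₕ ν} onto the set of all subsets of S(μ,ν). -/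
open Classical

lemma mem_cells {f : ℕ → ℕ} {i j : ℕ} : (i, j) ∈ cells f ↔ j < f i := Iff.rfl

lemma ncard_Iio_nat (n : ℕ) : (Set.Iio n : Set ℕ).ncard = n := by
  rw [show (Set.Iio n : Set ℕ) = ↑(Finset.range n) by ext k; simp,
    Set.ncard_coe_finset, Finset.card_range]

lemma ptranspose_eq_succ_iff {nu : ℕ → ℕ} (hnu : IsPartition nu) (i j : ℕ) :
    ptranspose nu j = i + 1 ↔ (nu (i + 1) ≤ j ∧ j < nu i) := by
  obtain ⟨hdec, N, hN⟩ := hnu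
  have hanti : Antitone nu := antitone_nat_of_succ_le hdec
  have hfin : {k | j < nu k}.Finite := by
    apply Set.Finite.subset (Set.finite_Iio N)
    intro k hk
    simp only [Set.mem_setOf_eq] at hk
    by_contra hkN
    simp only [Set.mem_Iio, not_lt] at hkN
    rw [hN k hkN] at hk
    omega
  constructor
  · intro h
    constructor
    · by_contra hlt
      push_neg at hlt
      have hsub : Set.Iio (i + 2) ⊆ {k | j < nu k} := by
        intro k hk
        exact lt_of_lt_of_le hlt (hanti (Nat.lt_succ_iff.mp hk))
      have hle := Set.ncard_le_ncard hsub hfin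
      rw [ncard_Iio_nat] at hle
      unfold ptranspose at h
      omega
    · by_contra hge
      push_neg at hge
      have hsub : {k | j < nu k} ⊆ Set.Iio i := by
        intro k hk
        simp only [Set.mem_setOf_eq] at hk
        by_contra hki
        simp only [Set.mem_Iio, not_lt] at hki
        exact absurd (lt_of_lt_of_le hk (hanti hki)) (not_lt.mpr hge)
      have hle := Set.ncard_le_ncard hsub (Set.finite_Iio i)
      rw [ncard_Iio_nat] at hle
      unfold ptranspose at h
      omega
  · rintro ⟨ha, hb⟩
    have heq : {k | j < nu k} = Set.Iio (i + 1) := by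
      ext k
      simp only [Set.mem_setOf_eq, Set.mem_Iio]
      constructor
      · intro hk
        by_contra hki
        push_neg at hki
        exact absurd (lt_of_lt_of_le hk (le_trans (hanti hki) ha)) (lt_irrefl j)
      · intro hk
        exact lt_of_lt_of_le hb (hanti (Nat.lt_succ_iff.mp hk))
    unfold ptranspose
    rw [heq, ncard_Iio_nat]

lemma mem_Sset_iff {mu nu : ℕ → ℕ} (hnu : IsPartition nu) {i j : ℕ} :
    (i, j) ∈ Sset mu nu ↔ (mu i = j + 1 ∧ nu (i + 1) ≤ j ∧ j < nu i) := by
  simp only [Sset, Set.mem_setOf_eq]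
  rw [ptranspose_eq_succ_iff hnu]

/-- The per-row description of the valid intermediate shapes. -/
def rowP (mu nu lam : ℕ → ℕ) (i : ℕ) : Prop :=
  lam i = min (mu i) (nu i) ∨
    (lam i + 1 = min (mu i) (nu i) ∧ (i, lam i) ∈ Sset mu nu)

lemma claimA {mu nu lam : ℕ → ℕ} (hnu : IsPartition nu)
    (h1 : ∀ i, mu i ≤ nu i + 1) (h2 : ∀ i, nu (i + 1) ≤ mu i) :
    (VStrip lam mu ∧ HStrip lam nu) ↔ ∀ i, rowP mu nu lam i := by
  constructor
  · rintro ⟨hV, hH⟩ i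
    obtain ⟨hVl, hVu⟩ := hV i
    obtain ⟨hHl, hHu⟩ := hH i
    by_cases hc : lam i = min (mu i) (nu i)
    · exact Or.inl hc
    · refine Or.inr ⟨by omega, ?_⟩
      rw [mem_Sset_iff hnu]
      exact ⟨by omega, hHu, by omega⟩
  · intro hP
    have key : ∀ i, lam i ≤ mu i ∧ mu i ≤ lam i + 1 ∧ lam i ≤ nu i ∧ nu (i + 1) ≤ lam i := by
      intro i
      rcases hP i with h | ⟨h, hS⟩
      · have e1 := h1 i; have e2 := h2 i; have e3 := hnu.1 i
        omega
      · rw [mem_Sset_iff hnu] at hS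
        omega
    exact ⟨fun i => ⟨(key i).1, (key i).2.1⟩, fun i => ⟨(key i).2.2.1, (key i).2.2.2⟩⟩

lemma claimB {mu nu lam : ℕ → ℕ} (hnu : IsPartition nu) :
    ((cells mu ∩ cells nu) \ Sset mu nu ⊆ cells lam ∧ cells lam ⊆ cells mu ∩ cells nu)
      ↔ ∀ i, rowP mu nu lam i := by
  constructor
  · rintro ⟨hlow, hhigh⟩ i
    have hle : lam i ≤ min (mu i) (nu i) := by
      by_contra hgt
      push_neg at hgt
      have hmem : (i, min (mu i) (nu i)) ∈ cells lam := mem_cells.mpr hgt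
      obtain ⟨ha, hb⟩ := hhigh hmem
      rw [mem_cells] at ha hb
      omega
    by_cases hc : lam i = min (mu i) (nu i)
    · exact Or.inl hc
    · have hS : (i, lam i) ∈ Sset mu nu := by
        by_contra hS
        have hmem : (i, lam i) ∈ (cells mu ∩ cells nu) \ Sset mu nu :=
          ⟨⟨mem_cells.mpr (by omega), mem_cells.mpr (by omega)⟩, hS⟩
        exact absurd (mem_cells.mp (hlow hmem)) (lt_irrefl _)
      obtain ⟨ha, hb, hc'⟩ := (mem_Sset_iff hnu).mp hS
      exact Or.inr ⟨by omega, hS⟩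
  · intro hP
    constructor
    · rintro ⟨i, j⟩ ⟨⟨ha, hb⟩, hS⟩
      rw [mem_cells] at ha hb
      rw [mem_cells]
      rcases hP i with h | ⟨h, hS'⟩
      · omega
      · by_contra hj
        push_neg at hj
        have hje : j = lam i := by omega
        rw [hje] at hS
        exact hS hS'
    · rintro ⟨i, j⟩ hj
      rw [mem_cells] at hj
      rcases hP i with h | ⟨h, _⟩ <;>
        exact ⟨mem_cells.mpr (by omega), mem_cells.mpr (by omega)⟩

lemma injAux {mu nu lam lam' : ℕ → ℕ}
    (hP : ∀ i, rowP mu nu lam i) (hP' : ∀ i, rowP mu nu lam' i)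
    (heq : cells lam ∩ Sset mu nu = cells lam' ∩ Sset mu nu) (i : ℕ) :
    lam i ≤ lam' i := by
  rcases hP i with h | ⟨h, _⟩
  · rcases hP' i with h' | ⟨h', hS'⟩
    · omega
    · exfalso
      have hmem : (i, lam' i) ∈ cells lam ∩ Sset mu nu :=
        ⟨mem_cells.mpr (by omega), hS'⟩
      rw [heq] at hmem
      exact absurd (mem_cells.mp hmem.1) (lt_irrefl _)
  · rcases hP' i with h' | ⟨h', _⟩ <;> omega

/-- The intermediate shape determined by a subset `A` of `S(μ,ν)`. -/
noncomputable def chooseLam (mu nu : ℕ → ℕ) (A : Set (ℕ × ℕ)) : ℕ → ℕ := fun i =>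
  if (i, min (mu i) (nu i) - 1) ∈ A then min (mu i) (nu i)
  else if (i, min (mu i) (nu i) - 1) ∈ Sset mu nu then min (mu i) (nu i) - 1
  else min (mu i) (nu i)

/-- Description of the intermediate shapes in the binary shape datum by
obligatory and optional squares. -/
theorem binary_intermediate_shapes (mu nu : ℕ → ℕ)
    (hmu : IsPartition mu) (hnu : IsPartition nu)
    (hex : ∃ lam0, IsPartition lam0 ∧ VStrip lam0 mu ∧ HStrip lam0 nu) :
    (∀ lam, IsPartition lam →
      ((VStrip lam mu ∧ HStrip lam nu) ↔
        ((cells mu ∩ cells nu) \ Sset mu nu ⊆ cells lam ∧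
          cells lam ⊆ cells mu ∩ cells nu))) ∧
    Set.BijOn (fun lam : ℕ → ℕ => cells lam ∩ Sset mu nu)
      {lam : ℕ → ℕ | IsPartition lam ∧ VStrip lam mu ∧ HStrip lam nu}
      {A : Set (ℕ × ℕ) | A ⊆ Sset mu nu} := by
  obtain ⟨lam0, _, hV0, hH0⟩ := hex
  have h1 : ∀ i, mu i ≤ nu i + 1 := fun i => le_trans (hV0 i).2 (Nat.add_le_add_right (hH0 i).1 1)
  have h2 : ∀ i, nu (i + 1) ≤ mu i := fun i => le_trans (hH0 i).2 (hV0 i).1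
  refine ⟨fun lam _ => (claimA hnu h1 h2).trans (claimB hnu).symm, ?_, ?_, ?_⟩
  · intro lam _
    exact Set.inter_subset_right
  · intro lam hlam lam' hlam' heq
    have hP := (claimA hnu h1 h2).mp hlam.2
    have hP' := (claimA hnu h1 h2).mp hlam'.2
    have heq' : cells lam ∩ Sset mu nu = cells lam' ∩ Sset mu nu := heq
    funext i
    exact le_antisymm (injAux hP hP' heq' i) (injAux hP' hP heq'.symm i)
  · intro A hA
    have hAS : A ⊆ Sset mu nu := hA
    set lam : ℕ → ℕ := chooseLam mu nu A with hlamdef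
    have hP : ∀ i, rowP mu nu lam i := by
      intro i
      rw [hlamdef]
      unfold rowP
      simp only [chooseLam]
      split_ifs with hA1 hS1
      · exact Or.inl rfl
      · obtain ⟨ha, hb, hc⟩ := (mem_Sset_iff hnu).mp hS1
        exact Or.inr ⟨by omega, hS1⟩
      · exact Or.inl rfl
    have hVH : VStrip lam mu ∧ HStrip lam nu := (claimA hnu h1 h2).mpr hP
    have hPart : IsPartition lam := by
      constructor
      · intro i
        exact le_trans (hVH.2 (i + 1)).1 (hVH.2 i).2
      · obtain ⟨N, hN⟩ := hmu.2
        refine ⟨N, fun i hi => ?_⟩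
        have := (hVH.1 i).1
        rw [hN i hi] at this
        omega
    refine ⟨lam, ⟨hPart, hVH⟩, ?_⟩
    show cells lam ∩ Sset mu nu = A
    ext ⟨i, j⟩
    constructor
    · rintro ⟨hcell, hS⟩
      rw [mem_cells] at hcell
      obtain ⟨ha, hb, hc⟩ := (mem_Sset_iff hnu).mp hS
      have hj : min (mu i) (nu i) - 1 = j := by omega
      by_contra hnA
      have hlj : lam i = j := by
        rw [hlamdef]
        simp only [chooseLam]
        rw [hj]
        rw [if_neg hnA, if_pos hS]
      omega
    · intro hjA
      have hS : (i, j) ∈ Sset mu nu := hAS hjA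
      obtain ⟨ha, hb, hc⟩ := (mem_Sset_iff hnu).mp hS
      have hj : min (mu i) (nu i) - 1 = j := by omega
      have hlami : lam i = j + 1 := by
        rw [hlamdef]
        simp only [chooseLam]
        rw [hj, if_pos hjA]
        omega
      exact ⟨mem_cells.mpr (by omega), hS⟩
end

section
/- Description of the resulting shapes in the binary shape datum by obligatory and optional squares. Let μ, ν be partitions such that there exists at least one partition κ₀ with μ ≤ₕ κ₀ and ν ≤ᵥ κ₀. Then for every partition κ, one has (μ ≤ₕ κ and ν ≤ᵥ κ) if and only if cells(μ) ∪ cells(ν) ⊆ cells(κ) ⊆ (cells(μ) ∪ cells(ν)) ∪ T(μ,ν). Moreover the map κ ↦ cells(κ) ∩ T(μ,ν) is a bijection from {κ : κ a partition with μ ≤ₕ κ and ν ≤ᵥ κ} onto the set of all subsets of T(μ,ν). -/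
lemma downclosed_mem_iff {s : Set ℕ} (hfin : s.Finite)
    (hdc : ∀ a b : ℕ, a ≤ b → b ∈ s → a ∈ s) (i : ℕ) : i ∈ s ↔ i < s.ncard := by
  rcases s.eq_empty_or_nonempty with h | h
  · simp [h]
  · have ht : hfin.toFinset.Nonempty := by
      rwa [Set.Finite.toFinset_nonempty]
    set m := hfin.toFinset.max' ht with hm
    have hseq : s = Set.Iio (m + 1) := by
      ext x
      constructor
      · intro hx
        have : x ≤ m := Finset.le_max' _ x (hfin.mem_toFinset.2 hx)
        simpa [Set.mem_Iio] using Nat.lt_succ_of_le this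
      · intro hx
        have hmem : m ∈ s := hfin.mem_toFinset.1 (hfin.toFinset.max'_mem ht)
        exact hdc x m (Nat.lt_succ_iff.1 hx) hmem
    rw [hseq, ← Finset.coe_Iio, Set.ncard_coe_finset, Nat.card_Iio]
    simp [hseq, Set.mem_Iio]

lemma partition_antitone {mu : ℕ → ℕ} (hmu : IsPartition mu) : Antitone mu :=
  antitone_nat_of_succ_le hmu.1

lemma lt_iff_lt_ptranspose {mu : ℕ → ℕ} (hmu : IsPartition mu) (i j : ℕ) :
    j < mu i ↔ i < ptranspose mu j := by
  have hfin : {i : ℕ | j < mu i}.Finite := by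
    obtain ⟨N, hN⟩ := hmu.2
    apply Set.Finite.subset (Set.finite_Iio N)
    intro x hx
    simp only [Set.mem_setOf_eq] at hx
    by_contra hc
    simp only [Set.mem_Iio, not_lt] at hc
    rw [hN x hc] at hx; omega
  have hdc : ∀ a b : ℕ, a ≤ b → b ∈ {i : ℕ | j < mu i} → a ∈ {i : ℕ | j < mu i} :=
    fun a b hab hb => lt_of_lt_of_le hb (partition_antitone hmu hab)
  exact downclosed_mem_iff hfin hdc i

/-- Description of the resulting shapes in the binary shape datum by
obligatory and optional squares. -/
theorem binary_resulting_shapes (mu nu : ℕ → ℕ)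
    (hmu : IsPartition mu) (hnu : IsPartition nu)
    (hex : ∃ kap0, IsPartition kap0 ∧ HStrip mu kap0 ∧ VStrip nu kap0) :
    (∀ kap, IsPartition kap →
      ((HStrip mu kap ∧ VStrip nu kap) ↔
        (cells mu ∪ cells nu ⊆ cells kap ∧
          cells kap ⊆ (cells mu ∪ cells nu) ∪ Tset mu nu))) ∧
    Set.BijOn (fun kap : ℕ → ℕ => cells kap ∩ Tset mu nu)
      {kap : ℕ → ℕ | IsPartition kap ∧ HStrip mu kap ∧ VStrip nu kap}
      {A : Set (ℕ × ℕ) | A ⊆ Tset mu nu} := by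
  classical
  have hptm := lt_iff_lt_ptranspose hmu
  -- key consequences of the existence hypothesis
  obtain ⟨k0, hk0p, hk0h, hk0v⟩ := hex
  have hk1 : ∀ i, mu i ≤ nu i + 1 := fun i => le_trans (hk0h i).1 (hk0v i).2
  have hk2 : ∀ i, nu (i + 1) ≤ mu i := fun i => le_trans (hk0v (i + 1)).1 (hk0h i).2
  -- characterization of Tset membership
  have hT : ∀ i j, (i, j) ∈ Tset mu nu ↔
      (nu i = j ∧ mu i ≤ j ∧ ∀ i', i = i' + 1 → j < mu i') := by
    intro i j
    simp only [Tset, Set.mem_setOf_eq]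
    constructor
    · rintro ⟨hpt, hnuj⟩
      refine ⟨hnuj, ?_, ?_⟩
      · by_contra hc
        push_neg at hc
        have := (hptm i j).1 hc
        omega
      · intro i' hi'
        have : i' < ptranspose mu j := by omega
        exact (hptm i' j).2 this
    · rintro ⟨hnuj, hmuj, hlast⟩
      refine ⟨?_, hnuj⟩
      have hle : ptranspose mu j ≤ i := by
        by_contra hc
        push_neg at hc
        have := (hptm i j).2 hc
        omega
      rcases Nat.eq_zero_or_eq_succ_pred i with h0 | hs
      · omega
      · have := (hptm (i - 1) j).1 (hlast (i - 1) hs)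
        omega
  -- characterization of the valid kappas
  have hchar : ∀ kap : ℕ → ℕ,
      (IsPartition kap ∧ HStrip mu kap ∧ VStrip nu kap) ↔
      ((∀ i, max (mu i) (nu i) ≤ kap i ∧ kap i ≤ nu i + 1) ∧ ∀ i, kap (i + 1) ≤ mu i) := by
    intro kap
    constructor
    · rintro ⟨-, hh, hv⟩
      exact ⟨fun i => ⟨max_le (hh i).1 (hv i).1, (hv i).2⟩, fun i => (hh i).2⟩
    · rintro ⟨h1, h2⟩
      refine ⟨⟨fun i => le_trans (h2 i) (le_trans (le_max_left _ _) (h1 i).1), ?_⟩,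
        fun i => ⟨le_trans (le_max_left _ _) (h1 i).1, h2 i⟩,
        fun i => ⟨le_trans (le_max_right _ _) (h1 i).1, (h1 i).2⟩⟩
      obtain ⟨N, hN⟩ := hmu.2
      refine ⟨N + 1, fun i hi => ?_⟩
      obtain ⟨i', rfl⟩ : ∃ i', i = i' + 1 := ⟨i - 1, by omega⟩
      have := h2 i'
      have := hN i' (by omega)
      omega
  -- a kappa exceeding the max in row i gives a T-cell
  have hstep : ∀ kap : ℕ → ℕ,
      ((∀ i, max (mu i) (nu i) ≤ kap i ∧ kap i ≤ nu i + 1) ∧ ∀ i, kap (i + 1) ≤ mu i) →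
      ∀ i, max (mu i) (nu i) < kap i →
        (i, nu i) ∈ Tset mu nu ∧ kap i = nu i + 1 ∧ mu i ≤ nu i := by
    intro kap ⟨h1, h2⟩ i hi
    have ha := (h1 i).1
    have hb := (h1 i).2
    have hmax1 := le_max_left (mu i) (nu i)
    have hmax2 := le_max_right (mu i) (nu i)
    have hmn : mu i ≤ nu i := by omega
    have hk : kap i = nu i + 1 := by omega
    refine ⟨(hT i (nu i)).2 ⟨rfl, hmn, ?_⟩, hk, hmn⟩
    intro i' hi'
    subst hi'
    have := h2 i'
    omega
  -- the cell-inclusion conditions are equivalent to the same characterization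
  have hcells : ∀ kap : ℕ → ℕ,
      (cells mu ∪ cells nu ⊆ cells kap ∧
        cells kap ⊆ (cells mu ∪ cells nu) ∪ Tset mu nu) ↔
      ((∀ i, max (mu i) (nu i) ≤ kap i ∧ kap i ≤ nu i + 1) ∧ ∀ i, kap (i + 1) ≤ mu i) := by
    intro kap
    constructor
    · rintro ⟨hsub1, hsub2⟩
      have hlow : ∀ i, max (mu i) (nu i) ≤ kap i := by
        intro i
        rcases Nat.eq_zero_or_pos (max (mu i) (nu i)) with h0 | hpos
        · omega
        · have hmem : (i, max (mu i) (nu i) - 1) ∈ cells mu ∪ cells nu := by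
            have := max_choice (mu i) (nu i)
            rcases this with h | h
            · exact Or.inl (by simp only [cells, Set.mem_setOf_eq]; omega)
            · exact Or.inr (by simp only [cells, Set.mem_setOf_eq]; omega)
          have := hsub1 hmem
          simp only [cells, Set.mem_setOf_eq] at this
          omega
      refine ⟨fun i => ⟨hlow i, ?_⟩, ?_⟩
      · by_contra hc
        push_neg at hc
        have hmem : (i, nu i + 1) ∈ cells kap := by
          simp only [cells, Set.mem_setOf_eq]; omega
        rcases hsub2 hmem with (h | h) | h
        · simp only [cells, Set.mem_setOf_eq] at h
          have := hk1 i; omega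
        · simp only [cells, Set.mem_setOf_eq] at h; omega
        · rw [hT] at h; omega
      · intro i
        by_contra hc
        push_neg at hc
        have hmem : (i + 1, mu i) ∈ cells kap := by
          simp only [cells, Set.mem_setOf_eq]; omega
        rcases hsub2 hmem with (h | h) | h
        · simp only [cells, Set.mem_setOf_eq] at h
          have := hmu.1 i; omega
        · simp only [cells, Set.mem_setOf_eq] at h
          have := hk2 i; omega
        · rw [hT] at h
          obtain ⟨-, -, hlast⟩ := h
          have := hlast i rfl; omega
    · rintro ⟨h1, h2⟩
      constructor
      · rintro ⟨i, j⟩ hij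
        have := (h1 i).1
        have hmax1 := le_max_left (mu i) (nu i)
        have hmax2 := le_max_right (mu i) (nu i)
        simp only [cells, Set.mem_union, Set.mem_setOf_eq] at hij ⊢
        omega
      · rintro ⟨i, j⟩ hij
        simp only [cells, Set.mem_setOf_eq] at hij
        rcases lt_or_ge j (max (mu i) (nu i)) with h | h
        · left
          simp only [cells, Set.mem_union, Set.mem_setOf_eq]
          have hmax := max_choice (mu i) (nu i)
          omega
        · right
          have hlt : max (mu i) (nu i) < kap i := by omega
          obtain ⟨hTm, hk, hmn⟩ := hstep kap ⟨h1, h2⟩ i hlt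
          have hj : j = nu i := by
            have := (h1 i).2
            have := le_max_right (mu i) (nu i)
            omega
          rwa [hj]
  refine ⟨fun kap hkap => ?_, ?_, ?_, ?_⟩
  · rw [hcells kap]
    constructor
    · intro h
      exact ((hchar kap).1 ⟨hkap, h⟩)
    · intro h
      exact ((hchar kap).2 h).2
  -- MapsTo
  · intro kap _
    exact Set.inter_subset_right
  -- InjOn
  · intro kap hkmem kap' hkmem' heq
    simp only [Set.mem_setOf_eq] at hkmem hkmem'
    have h := (hchar kap).1 hkmem
    have h' := (hchar kap').1 hkmem'
    funext i
    have ha := (h.1 i).1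
    have ha' := (h'.1 i).1
    have hb := (h.1 i).2
    have hb' := (h'.1 i).2
    have hmax2 := le_max_right (mu i) (nu i)
    have key : ∀ f g : ℕ → ℕ,
        ((∀ i, max (mu i) (nu i) ≤ f i ∧ f i ≤ nu i + 1) ∧ ∀ i, f (i + 1) ≤ mu i) →
        cells f ∩ Tset mu nu = cells g ∩ Tset mu nu →
        max (mu i) (nu i) < f i → max (mu i) (nu i) < g i := by
      intro f g hf hfg hlt
      obtain ⟨hTm, hk, hmn⟩ := hstep f hf i hlt
      have hmem : (i, nu i) ∈ cells f ∩ Tset mu nu := by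
        refine ⟨?_, hTm⟩
        simp only [cells, Set.mem_setOf_eq]
        omega
      rw [hfg] at hmem
      have := hmem.1
      simp only [cells, Set.mem_setOf_eq] at this
      omega
    have h1 := key kap kap' h heq
    have h2 := key kap' kap h' heq.symm
    by_cases hc : max (mu i) (nu i) < kap i
    · have := h1 hc
      have hk := (hstep kap h i hc).2.1
      have hk' := (hstep kap' h' i this).2.1
      omega
    · by_cases hc' : max (mu i) (nu i) < kap' i
      · have := h2 hc'
        omega
      · omega
  -- SurjOn
  · intro A hA
    simp only [Set.mem_setOf_eq] at hA
    refine ⟨fun i => if (i, nu i) ∈ A then nu i + 1 else max (mu i) (nu i), ?_, ?_⟩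
    · simp only [Set.mem_setOf_eq]
      rw [hchar]
      have hAfact : ∀ i, (i, nu i) ∈ A → mu i ≤ nu i ∧ ∀ i', i = i' + 1 → nu i < mu i' := by
        intro i hi
        have := (hT i (nu i)).1 (hA hi)
        exact ⟨this.2.1, this.2.2⟩
      constructor
      · intro i
        by_cases hi : (i, nu i) ∈ A
        · have := (hAfact i hi).1
          simp only [hi, if_pos]
          omega
        · simp only [hi, if_neg, if_false]
          have := hk1 i
          have hmax1 := le_max_left (mu i) (nu i)
          have hmax := max_choice (mu i) (nu i)
          omega
      · intro i
        by_cases hi : ((i + 1 : ℕ), nu (i + 1)) ∈ A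
        · have := (hAfact (i + 1) hi).2 i rfl
          simp only [hi, if_pos]
          omega
        · simp only [hi, if_neg, if_false]
          have := hk2 i
          have := hmu.1 i
          have hmax := max_choice (mu (i + 1)) (nu (i + 1))
          omega
    · ext ⟨i, j⟩
      simp only [Set.mem_inter_iff, cells, Set.mem_setOf_eq]
      constructor
      · rintro ⟨hcell, hTmem⟩
        have hj : nu i = j := ((hT i j).1 hTmem).1
        have hmn : mu i ≤ j := ((hT i j).1 hTmem).2.1
        by_cases hi : (i, nu i) ∈ A
        · rwa [← hj]
        · simp only [hi, if_neg, if_false] at hcell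
          have hmax := max_choice (mu i) (nu i)
          omega
      · intro hmem
        have hTmem := hA hmem
        have hj : nu i = j := ((hT i j).1 hTmem).1
        have hi : (i, nu i) ∈ A := by rwa [hj]
        refine ⟨?_, hTmem⟩
        simp only [hi, if_pos]
        omega
end

section
/- Equivalence of the two existence conditions for the binary shape datum. For all partitions μ and ν, there exists a partition λ with λ ≤ᵥ μ and λ ≤ₕ ν if and only if there exists a partition κ with μ ≤ₕ κ and ν ≤ᵥ κ. -/
/-- Equivalence of the two existence conditions for the binary shape datum. -/
theorem binary_existence_conditions_equiv (mu nu : ℕ → ℕ)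
    (hmu : IsPartition mu) (hnu : IsPartition nu) :
    (∃ lam, IsPartition lam ∧ VStrip lam mu ∧ HStrip lam nu) ↔
    (∃ kap, IsPartition kap ∧ HStrip mu kap ∧ VStrip nu kap) := by
  obtain ⟨hmu1, Nmu, hmu2⟩ := hmu
  obtain ⟨hnu1, Nnu, hnu2⟩ := hnu
  constructor
  · rintro ⟨lam, ⟨hl1, Nl, hl2⟩, hv, hh⟩
    refine ⟨fun i => max (mu i) (nu i), ⟨fun i => max_le_max (hmu1 i) (hnu1 i),
      max Nmu Nnu, fun i hi => ?_⟩, fun i => ?_, fun i => ?_⟩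
    · have := hmu2 i (le_trans (le_max_left _ _) hi)
      have := hnu2 i (le_trans (le_max_right _ _) hi)
      beta_reduce; omega
    · have h1 := (hv i).1
      have h2 := (hh i).2
      have := hmu1 i
      exact ⟨le_max_left _ _, by beta_reduce; omega⟩
    · have h1 := (hv i).2
      have h2 := (hh i).1
      exact ⟨le_max_right _ _, by beta_reduce; omega⟩
  · rintro ⟨kap, ⟨hk1, Nk, hk2⟩, hh, hv⟩
    refine ⟨fun i => min (mu i) (nu i), ⟨fun i => min_le_min (hmu1 i) (hnu1 i),
      Nmu, fun i hi => ?_⟩, fun i => ?_, fun i => ?_⟩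
    · have := hmu2 i hi; beta_reduce; omega
    · have h1 := (hh i).1
      have h2 := (hv i).2
      exact ⟨min_le_left _ _, by beta_reduce; omega⟩
    · have h1 := (hh i).2
      have h2 := (hv (i + 1)).1
      have := hnu1 i
      exact ⟨min_le_right _ _, by beta_reduce; omega⟩
end

section
/- Counting optional squares. Let μ, ν be partitions such that there exists at least one partition λ₀ with λ₀ ≤ᵥ μ and λ₀ ≤ₕ ν. Then the finite sets S(μ,ν) and T(μ,ν) satisfy #T(μ,ν) = #S(μ,ν) + 1. -/
lemma pt_eq_iff {f : ℕ → ℕ} (hf : IsPartition f) (j k : ℕ) :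
    ptranspose f j = k ↔ f k ≤ j ∧ ∀ l < k, j < f l := by
  obtain ⟨hdec, N, hN⟩ := hf
  have hanti : Antitone f := antitone_nat_of_succ_le hdec
  have hex : ∃ i, f i ≤ j := ⟨N, by rw [hN N le_rfl]; exact Nat.zero_le j⟩
  have hset : {i : ℕ | j < f i} = Set.Iio (Nat.find hex) := by
    ext i
    simp only [Set.mem_setOf_eq, Set.mem_Iio]
    constructor
    · intro h
      by_contra hc
      push_neg at hc
      exact absurd ((hanti hc).trans (Nat.find_spec hex)) (not_le.mpr h)
    · intro h
      exact lt_of_not_ge (Nat.find_min hex h)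
  have hval : ptranspose f j = Nat.find hex := by
    unfold ptranspose
    rw [hset, ← Finset.coe_Iio, Set.ncard_coe_finset, Nat.card_Iio]
  rw [hval, Nat.find_eq_iff]
  simp [not_le]

/-- Counting optional squares: `#T(μ,ν) = #S(μ,ν) + 1`. -/
theorem binary_optional_squares_count (mu nu : ℕ → ℕ)
    (hmu : IsPartition mu) (hnu : IsPartition nu)
    (hex : ∃ lam0, IsPartition lam0 ∧ VStrip lam0 mu ∧ HStrip lam0 nu) :
    (Sset mu nu).Finite ∧ (Tset mu nu).Finite ∧
    (Tset mu nu).ncard = (Sset mu nu).ncard + 1 := by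
  classical
  obtain ⟨lam0, _, hVS, hHS⟩ := hex
  have hc1 : ∀ i, mu i ≤ nu i + 1 := fun i => le_trans (hVS i).2 (Nat.add_le_add_right (hHS i).1 1)
  have hc2 : ∀ i, nu (i+1) ≤ mu i := fun i => le_trans (hHS i).2 (hVS i).1
  have hmud := hmu.1
  have hnud := hnu.1
  have hma : Antitone mu := antitone_nat_of_succ_le hmud
  have hna : Antitone nu := antitone_nat_of_succ_le hnud
  obtain ⟨Nm, hNm⟩ := hmu.2
  obtain ⟨Nn, hNn⟩ := hnu.2
  set N := max Nm Nn with hN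
  have hmz : ∀ i, N ≤ i → mu i = 0 := fun i hi => hNm i (le_trans (le_max_left _ _) hi)
  have hnz : ∀ i, N ≤ i → nu i = 0 := fun i hi => hNn i (le_trans (le_max_right _ _) hi)
  set SF : Finset ℕ := (Finset.range N).filter (fun i => mu i ≤ nu i ∧ nu (i+1) < mu i) with hSF
  set TF : Finset ℕ := (Finset.range (N+1)).filter
      (fun i => mu i ≤ nu i ∧ ∀ k < i, nu i < mu k) with hTF
  -- Description of Sset
  have hS : Sset mu nu = ↑(SF.image (fun i => (i, mu i - 1))) := by
    ext ⟨i, j⟩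
    simp only [Sset, Set.mem_setOf_eq, Finset.coe_image, Set.mem_image, Finset.mem_coe,
      hSF, Finset.mem_filter, Finset.mem_range]
    constructor
    · rintro ⟨h1, h2⟩
      rw [pt_eq_iff hnu] at h2
      obtain ⟨h2a, h2b⟩ := h2
      have hji : j < nu i := h2b i (Nat.lt_succ_self i)
      refine ⟨i, ⟨?_, ?_, ?_⟩, ?_⟩
      · by_contra hc
        push_neg at hc
        have := hmz i hc
        omega
      · omega
      · omega
      · have hj : mu i - 1 = j := by omega
        simp [Prod.ext_iff, hj]
    · rintro ⟨a, ⟨_, ha2, ha3⟩, heq⟩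
      injection heq with heq1 heq2
      subst heq1; subst heq2
      refine ⟨by omega, ?_⟩
      rw [pt_eq_iff hnu]
      refine ⟨by omega, fun l hl => lt_of_lt_of_le (by omega : mu a - 1 < nu a) (hna (by omega))⟩
  -- Description of Tset
  have hT : Tset mu nu = ↑(TF.image (fun i => (i, nu i))) := by
    ext ⟨i, j⟩
    simp only [Tset, Set.mem_setOf_eq, Finset.coe_image, Set.mem_image, Finset.mem_coe,
      hTF, Finset.mem_filter, Finset.mem_range]
    constructor
    · rintro ⟨h1, h2⟩
      rw [pt_eq_iff hmu] at h1
      obtain ⟨h1a, h1b⟩ := h1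
      subst h2
      refine ⟨i, ⟨?_, h1a, h1b⟩, rfl⟩
      by_contra hc
      push_neg at hc
      have hm0 : mu (i-1) = 0 := hmz (i-1) (by omega)
      have := h1b (i-1) (by omega)
      omega
    · rintro ⟨a, ⟨_, ha2, ha3⟩, heq⟩
      injection heq with heq1 heq2
      subst heq1; subst heq2
      exact ⟨(pt_eq_iff hmu _ _).2 ⟨ha2, ha3⟩, rfl⟩
  have hinj1 : Function.Injective (fun i : ℕ => (i, mu i - 1)) :=
    fun a b h => congrArg Prod.fst h
  have hinj2 : Function.Injective (fun i : ℕ => (i, nu i)) :=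
    fun a b h => congrArg Prod.fst h
  refine ⟨hS ▸ (SF.image _).finite_toSet, hT ▸ (TF.image _).finite_toSet, ?_⟩
  rw [hS, hT, Set.ncard_coe_finset, Set.ncard_coe_finset,
    Finset.card_image_of_injective _ hinj1, Finset.card_image_of_injective _ hinj2]
  -- Now count: TF.card = SF.card + 1
  have hScard : SF.card = ∑ i ∈ Finset.range N,
      (if mu i ≤ nu i ∧ nu (i+1) < mu i then 1 else 0) := Finset.card_filter _ _
  have hTcard : TF.card = ∑ i ∈ Finset.range (N+1),
      (if mu i ≤ nu i ∧ ∀ k < i, nu i < mu k then 1 else 0) := Finset.card_filter _ _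
  have hTsplit : TF.card = (∑ i ∈ Finset.range N,
      (if mu (i+1) ≤ nu (i+1) ∧ nu (i+1) < mu i then 1 else 0)) +
      (if mu 0 ≤ nu 0 then 1 else 0) := by
    rw [hTcard, Finset.sum_range_succ']
    congr 1
    · apply Finset.sum_congr rfl
      intro i _
      congr 1
      apply propext
      constructor
      · rintro ⟨h1, h2⟩
        exact ⟨h1, h2 i (Nat.lt_succ_self i)⟩
      · rintro ⟨h1, h2⟩
        exact ⟨h1, fun k hk => lt_of_lt_of_le h2 (hma (by omega))⟩
    · simp
  -- key pointwise identity
  have key : ∀ i, (if mu (i+1) ≤ nu (i+1) ∧ nu (i+1) < mu i then 1 else 0) +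
      (if mu i ≤ nu i then 1 else 0) =
      (if mu i ≤ nu i ∧ nu (i+1) < mu i then 1 else 0) +
      (if mu (i+1) ≤ nu (i+1) then 1 else 0) := by
    intro i
    by_cases hlt : nu (i+1) < mu i
    · simp only [hlt, and_true]
      exact Nat.add_comm _ _
    · have heq : nu (i+1) = mu i := le_antisymm (hc2 i) (not_lt.mp hlt)
      have hPi : mu i ≤ nu i := heq ▸ hna (Nat.le_succ i)
      have hPsi : mu (i+1) ≤ nu (i+1) := heq ▸ hmud i
      simp [hlt, hPi, hPsi]
  have hsum : (∑ i ∈ Finset.range N, (if mu (i+1) ≤ nu (i+1) ∧ nu (i+1) < mu i then 1 else 0)) +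
      (∑ i ∈ Finset.range N, (if mu i ≤ nu i then (1:ℕ) else 0)) =
      (∑ i ∈ Finset.range N, (if mu i ≤ nu i ∧ nu (i+1) < mu i then 1 else 0)) +
      (∑ i ∈ Finset.range N, (if mu (i+1) ≤ nu (i+1) then 1 else 0)) := by
    rw [← Finset.sum_add_distrib, ← Finset.sum_add_distrib]
    exact Finset.sum_congr rfl (fun i _ => key i)
  have h1 : ∑ i ∈ Finset.range (N+1), (if mu i ≤ nu i then (1:ℕ) else 0) =
      (∑ i ∈ Finset.range N, (if mu i ≤ nu i then 1 else 0)) +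
      (if mu N ≤ nu N then 1 else 0) := Finset.sum_range_succ _ _
  have h2 : ∑ i ∈ Finset.range (N+1), (if mu i ≤ nu i then (1:ℕ) else 0) =
      (∑ i ∈ Finset.range N, (if mu (i+1) ≤ nu (i+1) then 1 else 0)) +
      (if mu 0 ≤ nu 0 then 1 else 0) := Finset.sum_range_succ' _ _
  have hPN : mu N ≤ nu N := by rw [hmz N le_rfl]; exact Nat.zero_le _
  rw [if_pos hPN] at h1
  rw [hScard]
  omega
end

section
/- There are twice as many resulting shapes as intermediate shapes in the binary shape datum. Let μ, ν be partitions such that there exists at least one partition λ₀ with λ₀ ≤ᵥ μ and λ₀ ≤ₕ ν. Then the sets {λ : λ a partition with λ ≤ᵥ μ and λ ≤ₕ ν} and {κ : κ a partition with μ ≤ₕ κ and ν ≤ᵥ κ} are finite and #{κ : μ ≤ₕ κ and ν ≤ᵥ κ} = 2 · #{λ : λ ≤ᵥ μ and λ ≤ₕ ν}. -/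
/-- Aux: the "previous row" bound for the resulting shape. -/
def prevOr (mu nu : ℕ → ℕ) : ℕ → ℕ
  | 0 => nu 0 + 1
  | (i+1) => mu i

lemma box_card (lo hi : ℕ → ℕ) (h1 : ∀ i, lo i ≤ hi i) (h2 : ∀ i, hi i ≤ lo i + 1)
    (M : ℕ) (hM : ∀ i, M ≤ i → hi i ≤ lo i) :
    {f : ℕ → ℕ | ∀ i, lo i ≤ f i ∧ f i ≤ hi i}.Finite ∧
    {f : ℕ → ℕ | ∀ i, lo i ≤ f i ∧ f i ≤ hi i}.ncard
      = 2 ^ ((Finset.range M).filter (fun i => lo i < hi i)).card := by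
  set F := (Finset.range M).filter (fun i => lo i < hi i) with hF
  have hFmem : ∀ i, i ∉ F → hi i ≤ lo i := by
    intro i hi'
    simp only [hF, Finset.mem_filter, Finset.mem_range, not_and, not_lt] at hi'
    by_cases h : i < M
    · exact hi' h
    · exact hM i (by omega)
  set S := {f : ℕ → ℕ | ∀ i, lo i ≤ f i ∧ f i ≤ hi i} with hS
  have e : S ≃ (F → Bool) := {
    toFun := fun f i => decide (f.1 i.1 = hi i.1)
    invFun := fun b => ⟨fun i => if h : i ∈ F then (if b ⟨i, h⟩ then hi i else lo i) else lo i, by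
      intro i
      dsimp only
      split_ifs with h h'
      · exact ⟨h1 i, le_rfl⟩
      · exact ⟨le_rfl, h1 i⟩
      · exact ⟨le_rfl, h1 i⟩⟩
    left_inv := by
      rintro ⟨f, hf⟩
      apply Subtype.ext
      funext i
      dsimp only
      split_ifs with h h'
      · simp only [decide_eq_true_eq] at h'; omega
      · have := hf i; have := h2 i
        simp only [decide_eq_true_eq] at h'; omega
      · have := hf i; have := hFmem i h; omega
    right_inv := by
      intro b
      funext d
      obtain ⟨i, hi'⟩ := d
      have hlt : lo i < hi i := (Finset.mem_filter.mp hi').2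
      simp only [dif_pos hi']
      cases hb : b ⟨i, hi'⟩ <;> simp [hb] <;> omega }
  haveI : Finite S := Finite.of_equiv _ e.symm
  refine ⟨Set.toFinite S, ?_⟩
  rw [← Nat.card_coe_set_eq, Nat.card_congr e, Nat.card_eq_fintype_card,
      Fintype.card_fun, Fintype.card_coe, Fintype.card_bool]

lemma telescope (mu nu : ℕ → ℕ) (hmud : ∀ i, mu (i+1) ≤ mu i) (hnud : ∀ i, nu (i+1) ≤ nu i)
    (h1 : ∀ i, nu (i+1) ≤ mu i)
    (N : ℕ) (hN : mu N = 0) (hN' : nu N = 0) :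
    (∑ i ∈ Finset.range N, (if nu (i+1) < mu i ∧ mu i ≤ nu i then 1 else 0)) + 1
    = (∑ i ∈ Finset.range N, (if mu (i+1) ≤ nu (i+1) ∧ nu (i+1) < mu i then 1 else 0))
      + (if mu 0 ≤ nu 0 then 1 else 0) := by
  have key : ∀ n,
      (∑ i ∈ Finset.range n, (if nu (i+1) < mu i ∧ mu i ≤ nu i then 1 else 0))
        + (if mu n ≤ nu n then 1 else 0)
      = (∑ i ∈ Finset.range n, (if mu (i+1) ≤ nu (i+1) ∧ nu (i+1) < mu i then 1 else 0))
        + (if mu 0 ≤ nu 0 then 1 else 0) := by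
    intro n
    induction n with
    | zero => simp
    | succ n ih =>
      rw [Finset.sum_range_succ, Finset.sum_range_succ]
      have := h1 n
      have := hmud n
      have := hnud n
      split_ifs at ih ⊢ <;> omega
  have := key N
  have h0 : mu N ≤ nu N := by omega
  rw [if_pos h0] at this
  omega

/-- There are twice as many resulting shapes as intermediate shapes
in the binary shape datum. -/
theorem binary_shape_count (mu nu : ℕ → ℕ)
    (hmu : IsPartition mu) (hnu : IsPartition nu)
    (hex : ∃ lam0, IsPartition lam0 ∧ VStrip lam0 mu ∧ HStrip lam0 nu) :
    {lam : ℕ → ℕ | IsPartition lam ∧ VStrip lam mu ∧ HStrip lam nu}.Finite ∧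
    {kap : ℕ → ℕ | IsPartition kap ∧ HStrip mu kap ∧ VStrip nu kap}.Finite ∧
    {kap : ℕ → ℕ | IsPartition kap ∧ HStrip mu kap ∧ VStrip nu kap}.ncard =
      2 * {lam : ℕ → ℕ | IsPartition lam ∧ VStrip lam mu ∧ HStrip lam nu}.ncard := by
  obtain ⟨lam0, hl0p, hl0v, hl0h⟩ := hex
  obtain ⟨hmud, Nm, hNm⟩ := hmu
  obtain ⟨hnud, Nn, hNn⟩ := hnu
  set N := max Nm Nn with hNdef
  have hmu0 : ∀ i, N ≤ i → mu i = 0 := fun i hi => hNm i (le_trans (le_max_left _ _) hi)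
  have hnu0 : ∀ i, N ≤ i → nu i = 0 := fun i hi => hNn i (le_trans (le_max_right _ _) hi)
  have h1 : ∀ i, nu (i+1) ≤ mu i := fun i => le_trans (hl0h i).2 (hl0v i).1
  have h2 : ∀ i, mu i ≤ nu i + 1 := fun i =>
    le_trans (hl0v i).2 (Nat.succ_le_succ (hl0h i).1)
  -- the L box
  have hLset : {lam : ℕ → ℕ | IsPartition lam ∧ VStrip lam mu ∧ HStrip lam nu}
      = {f : ℕ → ℕ | ∀ i, max (mu i - 1) (nu (i+1)) ≤ f i ∧ f i ≤ min (mu i) (nu i)} := by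
    ext f
    constructor
    · rintro ⟨hp, hv, hh⟩ i
      have h3 := (hv i).1
      have h4 := (hv i).2
      have h5 := (hh i).1
      have h6 := (hh i).2
      omega
    · intro hf
      refine ⟨⟨fun i => ?_, Nm, fun i hi => ?_⟩, fun i => ?_, fun i => ?_⟩
      · have ha := (hf (i+1)).2
        have hb := (hf i).1
        have := hnud i
        omega
      · have := (hf i).2
        have := hNm i hi
        omega
      · have := (hf i).1; have := (hf i).2; omega
      · have := (hf i).1; have := (hf i).2; omega
  -- the K box
  have hKset : {kap : ℕ → ℕ | IsPartition kap ∧ HStrip mu kap ∧ VStrip nu kap}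
      = {f : ℕ → ℕ | ∀ i, max (mu i) (nu i) ≤ f i ∧
          f i ≤ min (nu i + 1) (prevOr mu nu i)} := by
    ext f
    constructor
    · rintro ⟨hp, hh, hv⟩ i
      have h3 := (hh i).1
      have h5 := (hv i).1
      have h6 := (hv i).2
      cases i with
      | zero => simp only [prevOr]; omega
      | succ j =>
        have h4 := (hh j).2
        simp only [prevOr]; omega
    · intro hf
      refine ⟨⟨fun i => ?_, Nm + 1, fun i hi => ?_⟩, fun i => ?_, fun i => ?_⟩
      · have ha := (hf (i+1)).2
        have hb := (hf i).1
        simp only [prevOr] at ha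
        omega
      · obtain ⟨j, rfl⟩ : ∃ j, i = j + 1 := ⟨i - 1, by omega⟩
        have ha := (hf (j+1)).2
        simp only [prevOr] at ha
        have := hNm j (by omega)
        omega
      · constructor
        · have := (hf i).1; omega
        · have ha := (hf (i+1)).2
          simp only [prevOr] at ha
          omega
      · have ha := (hf i).1
        have hb := (hf i).2
        refine ⟨by omega, ?_⟩
        have : min (nu i + 1) (prevOr mu nu i) ≤ nu i + 1 := min_le_left _ _
        omega
  -- apply box_card
  have eL1 : ∀ i, max (mu i - 1) (nu (i+1)) ≤ min (mu i) (nu i) := fun i => by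
    have := h1 i; have := h2 i; have := hnud i; omega
  have eL2 : ∀ i, min (mu i) (nu i) ≤ max (mu i - 1) (nu (i+1)) + 1 := fun i => by omega
  have eL3 : ∀ i, N ≤ i → min (mu i) (nu i) ≤ max (mu i - 1) (nu (i+1)) := fun i hi => by
    have := hmu0 i hi; omega
  have eK1 : ∀ i, max (mu i) (nu i) ≤ min (nu i + 1) (prevOr mu nu i) := by
    intro i
    cases i with
    | zero => simp only [prevOr]; have := h2 0; omega
    | succ j => simp only [prevOr]; have := h1 j; have := h2 (j+1); have := hmud j; omega
  have eK2 : ∀ i, min (nu i + 1) (prevOr mu nu i) ≤ max (mu i) (nu i) + 1 := fun i => by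
    have := min_le_left (nu i + 1) (prevOr mu nu i); omega
  have eK3 : ∀ i, N + 1 ≤ i → min (nu i + 1) (prevOr mu nu i) ≤ max (mu i) (nu i) := by
    intro i hi
    obtain ⟨j, rfl⟩ : ∃ j, i = j + 1 := ⟨i - 1, by omega⟩
    simp only [prevOr]
    have := hmu0 j (by omega)
    omega
  -- now count
  have hLcount : ((Finset.range N).filter
        (fun i => max (mu i - 1) (nu (i+1)) < min (mu i) (nu i))).card
      = ∑ i ∈ Finset.range N, (if nu (i+1) < mu i ∧ mu i ≤ nu i then 1 else 0) := by
    rw [Finset.card_filter]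
    refine Finset.sum_congr rfl fun i _ => ?_
    congr 1
    · simp only [eq_iff_iff]
      omega
  have hKcount : ((Finset.range (N+1)).filter
        (fun i => max (mu i) (nu i) < min (nu i + 1) (prevOr mu nu i))).card
      = (∑ i ∈ Finset.range N, (if mu (i+1) ≤ nu (i+1) ∧ nu (i+1) < mu i then 1 else 0))
        + (if mu 0 ≤ nu 0 then 1 else 0) := by
    rw [Finset.card_filter, Finset.sum_range_succ']
    congr 1
    · refine Finset.sum_congr rfl fun i _ => ?_
      simp only [prevOr]
      congr 1
      simp only [eq_iff_iff]
      omega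
    · simp only [prevOr]
      congr 1
      simp only [eq_iff_iff]
      omega
  obtain ⟨hLfin, hLcard⟩ := box_card (fun i => max (mu i - 1) (nu (i+1)))
    (fun i => min (mu i) (nu i)) eL1 eL2 N eL3
  obtain ⟨hKfin, hKcard⟩ := box_card (fun i => max (mu i) (nu i))
    (fun i => min (nu i + 1) (prevOr mu nu i)) eK1 eK2 (N + 1) eK3
  rw [hLset, hKset]
  refine ⟨hLfin, hKfin, ?_⟩
  rw [hLcard, hKcard]
  rw [hLcount, hKcount,
    ← telescope mu nu hmud hnud h1 N (hmu0 N le_rfl) (hnu0 N le_rfl)]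
  ring
end

section
/- The row matching between optional squares. Let μ, ν be partitions such that there exists at least one partition λ₀ with λ₀ ≤ᵥ μ and λ₀ ≤ₕ ν. Then: distinct elements of T(μ,ν) have distinct first coordinates, T(μ,ν) is nonempty, and (letting t₀ denote the element of T(μ,ν) with minimal first coordinate) for every s = (i,j) ∈ S(μ,ν) the set {t ∈ T(μ,ν) : the first coordinate of t is > i} is nonempty; the function φ sending each s = (i,j) ∈ S(μ,ν) to the element of T(μ,ν) having minimal first coordinate among those elements whose first coordinate exceeds i is an injection from S(μ,ν) into T(μ,ν) whose image is exactly T(μ,ν) \ {t₀}. -/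
private lemma part_anti {f : ℕ → ℕ} (hf : IsPartition f) : Antitone f :=
  antitone_nat_of_succ_le hf.1

private lemma ptranspose_eq_of {f : ℕ → ℕ} (hf : IsPartition f) {j m : ℕ}
    (h1 : f m ≤ j) (h2 : ∀ i < m, j < f i) : ptranspose f j = m := by
  have hset : {i : ℕ | j < f i} = Set.Iio m := by
    ext i
    simp only [Set.mem_setOf_eq, Set.mem_Iio]
    constructor
    · intro hji
      by_contra hm
      push_neg at hm
      exact absurd hji (not_lt.mpr ((part_anti hf hm).trans h1))
    · exact h2 i
  show {i : ℕ | j < f i}.ncard = m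
  rw [hset, ← Finset.coe_Iio, Set.ncard_coe_finset, Nat.card_Iio]

private lemma ptranspose_eq_iff {f : ℕ → ℕ} (hf : IsPartition f) (j m : ℕ) :
    ptranspose f j = m ↔ (f m ≤ j ∧ ∀ i < m, j < f i) := by
  obtain ⟨N, hN⟩ := hf.2
  have hex : ∃ k, f k ≤ j := ⟨N, by rw [hN N le_rfl]; exact Nat.zero_le j⟩
  have hm0 : ptranspose f j = Nat.find hex :=
    ptranspose_eq_of hf (Nat.find_spec hex) (fun i hi => not_le.mp (Nat.find_min hex hi))
  constructor
  · intro h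
    have : m = Nat.find hex := by omega
    subst this
    exact ⟨Nat.find_spec hex, fun i hi => not_le.mp (Nat.find_min hex hi)⟩
  · intro ⟨h1, h2⟩
    exact ptranspose_eq_of hf h1 h2

private def Trow (mu nu : ℕ → ℕ) (i : ℕ) : Prop := mu i ≤ nu i ∧ ∀ k < i, nu i < mu k
private def Srow (mu nu : ℕ → ℕ) (i : ℕ) : Prop := mu i ≤ nu i ∧ nu (i + 1) < mu i

private lemma mem_Tset_iff (mu nu : ℕ → ℕ) (hmu : IsPartition mu) (p : ℕ × ℕ) :
    (ptranspose mu p.2 = p.1 ∧ nu p.1 = p.2) ↔ (Trow mu nu p.1 ∧ p.2 = nu p.1) := by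
  constructor
  · rintro ⟨h1, h2⟩
    obtain ⟨ha, hb⟩ := (ptranspose_eq_iff hmu p.2 p.1).mp h1
    exact ⟨⟨by omega, fun k hk => by have := hb k hk; omega⟩, h2.symm⟩
  · rintro ⟨⟨h1, h2⟩, h3⟩
    refine ⟨?_, h3.symm⟩
    rw [h3]
    exact ptranspose_eq_of hmu (h3 ▸ h1) (h3 ▸ h2)

private lemma mem_Sset_iff_s12 (mu nu : ℕ → ℕ) (hnu : IsPartition nu) (p : ℕ × ℕ) :
    (mu p.1 = p.2 + 1 ∧ ptranspose nu p.2 = p.1 + 1) ↔ (Srow mu nu p.1 ∧ p.2 + 1 = mu p.1) := by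
  constructor
  · rintro ⟨h1, h2⟩
    obtain ⟨ha, hb⟩ := (ptranspose_eq_iff hnu p.2 (p.1 + 1)).mp h2
    have hc : p.2 < nu p.1 := hb p.1 (by omega)
    exact ⟨⟨by omega, by omega⟩, h1.symm⟩
  · rintro ⟨⟨h1, h2⟩, h3⟩
    refine ⟨h3.symm, ptranspose_eq_of hnu (by omega) ?_⟩
    intro k hk
    have : nu p.1 ≤ nu k := part_anti hnu (by omega)
    omega

private lemma key2 (mu nu : ℕ → ℕ) (hmu : IsPartition mu) (hnu : IsPartition nu) :
    ∃ k, Trow mu nu k ∧ ∀ k', mu k' ≤ nu k' → k ≤ k' := by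
  obtain ⟨N, hN⟩ := hmu.2
  have hex : ∃ k, mu k ≤ nu k := ⟨N, by rw [hN N le_rfl]; exact Nat.zero_le _⟩
  refine ⟨Nat.find hex, ⟨Nat.find_spec hex, ?_⟩, fun k' hk' => Nat.find_min' hex hk'⟩
  intro k hk
  have h2 : ¬ mu (Nat.find hex - 1) ≤ nu (Nat.find hex - 1) :=
    Nat.find_min hex (by omega)
  have h3 : nu (Nat.find hex) ≤ nu (Nat.find hex - 1) := part_anti hnu (by omega)
  have h4 : mu (Nat.find hex - 1) ≤ mu k := part_anti hmu (by omega)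
  omega

private lemma key1 (mu nu : ℕ → ℕ) (hmu : IsPartition mu) (hnu : IsPartition nu)
    (i : ℕ) (hi : nu (i + 1) < mu i) :
    ∃ k, i < k ∧ Trow mu nu k ∧ ∀ k', i < k' → mu k' ≤ nu k' → k ≤ k' := by
  obtain ⟨N, hN⟩ := hmu.2
  have hex : ∃ k, i < k ∧ mu k ≤ nu k :=
    ⟨N + i + 1, by omega, by rw [hN _ (by omega)]; exact Nat.zero_le _⟩
  obtain ⟨hfi, hfs⟩ := Nat.find_spec hex
  refine ⟨Nat.find hex, hfi, ⟨hfs, ?_⟩, fun k' h1 h2 => Nat.find_min' hex ⟨h1, h2⟩⟩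
  intro k hk
  by_cases hcase : Nat.find hex = i + 1
  · have h4 : mu i ≤ mu k := part_anti hmu (by omega)
    have : nu (Nat.find hex) = nu (i+1) := by rw [hcase]
    omega
  · have h2 : ¬ (i < Nat.find hex - 1 ∧ mu (Nat.find hex - 1) ≤ nu (Nat.find hex - 1)) :=
      Nat.find_min hex (by omega)
    have h2' : ¬ mu (Nat.find hex - 1) ≤ nu (Nat.find hex - 1) := by
      intro hc; exact h2 ⟨by omega, hc⟩
    have h3 : nu (Nat.find hex) ≤ nu (Nat.find hex - 1) := part_anti hnu (by omega)
    have h4 : mu (Nat.find hex - 1) ≤ mu k := part_anti hmu (by omega)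
    omega

private lemma keyD (mu nu : ℕ → ℕ) (hmu : IsPartition mu) {a b : ℕ}
    (ha : Trow mu nu a) (hb : Trow mu nu b) (hab : a < b) :
    ∃ s, a ≤ s ∧ s < b ∧ Srow mu nu s := by
  classical
  have hb1 : nu b < mu (b - 1) := hb.2 (b - 1) (by omega)
  set P : ℕ → Prop := fun s => a ≤ s ∧ mu s ≤ nu s with hP
  set s0 := Nat.findGreatest P (b - 1) with hs0
  have hspec : P s0 := Nat.findGreatest_spec (m := a) (by omega) ⟨le_rfl, ha.1⟩
  have hle : s0 ≤ b - 1 := Nat.findGreatest_le (P := P) (b - 1)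
  refine ⟨s0, hspec.1, by omega, hspec.2, ?_⟩
  by_cases h : s0 = b - 1
  · have hb' : s0 + 1 = b := by omega
    rw [hb', h]
    exact hb1
  · have hnP : ¬ P (s0 + 1) := Nat.findGreatest_is_greatest (n := b - 1) (by omega) (by omega)
    have h1 : ¬ mu (s0 + 1) ≤ nu (s0 + 1) := fun hc => hnP ⟨by omega, hc⟩
    have h2 : mu (s0 + 1) ≤ mu s0 := part_anti hmu (by omega)
    omega

/-- The row matching between optional squares. -/
theorem binary_row_matching (mu nu : ℕ → ℕ)
    (hmu : IsPartition mu) (hnu : IsPartition nu)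
    (hex : ∃ lam0, IsPartition lam0 ∧ VStrip lam0 mu ∧ HStrip lam0 nu) :
    Set.InjOn Prod.fst (Tset mu nu) ∧
    (Tset mu nu).Nonempty ∧
    (∀ s ∈ Sset mu nu, ∃ t ∈ Tset mu nu, s.1 < t.1) ∧
    ∀ (t0 : ℕ × ℕ) (φ : (ℕ × ℕ) → (ℕ × ℕ)),
      t0 ∈ Tset mu nu → (∀ t ∈ Tset mu nu, t0.1 ≤ t.1) →
      (∀ s ∈ Sset mu nu, φ s ∈ Tset mu nu ∧ s.1 < (φ s).1 ∧
        ∀ t ∈ Tset mu nu, s.1 < t.1 → (φ s).1 ≤ t.1) →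
      Set.InjOn φ (Sset mu nu) ∧ φ '' (Sset mu nu) = Tset mu nu \ {t0} := by
  classical
  have hT : ∀ p : ℕ × ℕ, p ∈ Tset mu nu ↔ (Trow mu nu p.1 ∧ p.2 = nu p.1) :=
    fun p => mem_Tset_iff mu nu hmu p
  have hS : ∀ p : ℕ × ℕ, p ∈ Sset mu nu ↔ (Srow mu nu p.1 ∧ p.2 + 1 = mu p.1) :=
    fun p => mem_Sset_iff_s12 mu nu hnu p
  refine ⟨?_, ?_, ?_, ?_⟩
  · intro p hp q hq hpq
    have h1 := (hT p).mp hp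
    have h2 := (hT q).mp hq
    have : p.2 = q.2 := by rw [h1.2, h2.2, hpq]
    exact Prod.ext_iff.mpr ⟨hpq, this⟩
  · obtain ⟨k, hk, -⟩ := key2 mu nu hmu hnu
    exact ⟨(k, nu k), (hT _).mpr ⟨hk, rfl⟩⟩
  · intro s hs
    have h := (hS s).mp hs
    obtain ⟨k, hik, hk, -⟩ := key1 mu nu hmu hnu s.1 h.1.2
    exact ⟨(k, nu k), (hT _).mpr ⟨hk, rfl⟩, hik⟩
  · intro t0 φ ht0 ht0min hφ
    constructor
    · have main : ∀ p ∈ Sset mu nu, ∀ q ∈ Sset mu nu, p.1 < q.1 → φ p ≠ φ q := by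
        intro p hp q hq hlt heq
        obtain ⟨k, hik, hk, hkmin⟩ := key1 mu nu hmu hnu p.1 ((hS p).mp hp).1.2
        have hkT : (k, nu k) ∈ Tset mu nu := (hT _).mpr ⟨hk, rfl⟩
        have h1 : (φ p).1 ≤ k := (hφ p hp).2.2 _ hkT hik
        have h2 : k ≤ q.1 := hkmin q.1 hlt ((hS q).mp hq).1.1
        have h3 : q.1 < (φ q).1 := (hφ q hq).2.1
        rw [heq] at h1
        omega
      intro p hp q hq heq
      rcases lt_trichotomy p.1 q.1 with h | h | h
      · exact absurd heq (main p hp q hq h)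
      · have e1 := ((hS p).mp hp).2
        have e2 := ((hS q).mp hq).2
        rw [h] at e1
        exact Prod.ext_iff.mpr ⟨h, by omega⟩
      · exact absurd heq.symm (main q hq p hp h)
    · ext t
      constructor
      · rintro ⟨s, hsS, rfl⟩
        refine ⟨(hφ s hsS).1, ?_⟩
        obtain ⟨k, hk, hkmin⟩ := key2 mu nu hmu hnu
        have hkT : (k, nu k) ∈ Tset mu nu := (hT _).mpr ⟨hk, rfl⟩
        have h1 : t0.1 ≤ k := ht0min _ hkT
        have h2 : k ≤ s.1 := hkmin s.1 ((hS s).mp hsS).1.1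
        have h3 : s.1 < (φ s).1 := (hφ s hsS).2.1
        intro hc
        rw [Set.mem_singleton_iff] at hc
        rw [hc] at h3
        omega
      · rintro ⟨htT, hne⟩
        rw [Set.mem_singleton_iff] at hne
        have hbT := (hT t).mp htT
        have ht0T := (hT t0).mp ht0
        have hlt : t0.1 < t.1 := by
          rcases lt_or_eq_of_le (ht0min t htT) with h | h
          · exact h
          · exact absurd (Prod.ext_iff.mpr ⟨h.symm, by rw [hbT.2, ht0T.2, h]⟩) hne
        set b := t.1 with hbdef
        set a := Nat.findGreatest (Trow mu nu) (b - 1) with hadef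
        have haT : Trow mu nu a := Nat.findGreatest_spec (m := t0.1) (by omega) ht0T.1
        have hale : a ≤ b - 1 := Nat.findGreatest_le (P := Trow mu nu) (b - 1)
        obtain ⟨s, has, hsb, hsS⟩ := keyD mu nu hmu haT hbT.1 (by omega)
        have hmus : 1 ≤ mu s := by have := hsS.2; omega
        have hspS : (s, mu s - 1) ∈ Sset mu nu := (hS _).mpr ⟨hsS, by show mu s - 1 + 1 = mu s; omega⟩
        obtain ⟨hφT, hφgt, hφmin⟩ := hφ _ hspS
        have hφgt' : s < (φ (s, mu s - 1)).1 := hφgt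
        have h1 : (φ (s, mu s - 1)).1 ≤ b := hφmin t htT hsb
        have h2 : ¬ (φ (s, mu s - 1)).1 < b := by
          intro hc
          have := Nat.findGreatest_is_greatest (P := Trow mu nu) (n := b - 1)
            (show Nat.findGreatest (Trow mu nu) (b - 1) < (φ (s, mu s - 1)).1 by omega)
            (by omega)
          exact this ((hT _).mp hφT).1
        have hfst : (φ (s, mu s - 1)).1 = t.1 := by omega
        have hsnd : (φ (s, mu s - 1)).2 = t.2 := by
          rw [((hT _).mp hφT).2, hfst, hbT.2]
        exact ⟨(s, mu s - 1), hspS, Prod.ext_iff.mpr ⟨hfst, hsnd⟩⟩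
end

section
/- Equivalence of the row description and the column description of the matching. Let μ, ν be partitions such that there exists at least one partition λ₀ with λ₀ ≤ᵥ μ and λ₀ ≤ₕ ν. Then for every s = (i,j) ∈ S(μ,ν), the set of elements of T(μ,ν) whose first coordinate is strictly greater than i coincides with the set of elements of T(μ,ν) whose second coordinate is at most j; consequently, the element of T(μ,ν) with minimal first coordinate among those with first coordinate > i equals the element of T(μ,ν) with maximal second coordinate among those with second coordinate ≤ j. -/
lemma part_antitone' {f : ℕ → ℕ} (h : IsPartition f) : Antitone f :=
  antitone_nat_of_succ_le h.1

lemma transpose_setfin {f : ℕ → ℕ} (h : IsPartition f) (j : ℕ) :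
    {i : ℕ | j < f i}.Finite := by
  obtain ⟨N, hN⟩ := h.2
  apply Set.Finite.subset (Set.finite_Iio N)
  intro k hk
  by_contra hk'
  simp only [Set.mem_Iio, not_lt] at hk'
  simp [Set.mem_setOf_eq, hN k hk'] at hk

lemma transpose_lt_iff {f : ℕ → ℕ} (h : IsPartition f) (j k : ℕ) :
    j < f k ↔ k < ptranspose f j := by
  constructor
  · intro hj
    have hsub : Set.Iic k ⊆ {i : ℕ | j < f i} := fun m hm =>
      lt_of_lt_of_le hj (part_antitone' h hm)
    have := Set.ncard_le_ncard hsub (transpose_setfin h j)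
    rw [← Finset.coe_Iic, Set.ncard_coe_finset, Nat.card_Iic] at this
    simpa [ptranspose] using this
  · intro hk
    by_contra hj
    push_neg at hj
    have hsub : {i : ℕ | j < f i} ⊆ Set.Iio k := by
      intro m hm
      by_contra hm'
      simp only [Set.mem_Iio, not_lt] at hm'
      exact absurd (lt_of_lt_of_le hm (part_antitone' h hm')) (not_lt.2 hj)
    have := Set.ncard_le_ncard hsub (Set.finite_Iio k)
    rw [← Finset.coe_Iio, Set.ncard_coe_finset, Nat.card_Iio] at this
    simp only [ptranspose] at hk
    omega

/-- Equivalence of the row description and the column description of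
the matching. -/
theorem binary_matching_descriptions_equiv (mu nu : ℕ → ℕ)
    (hmu : IsPartition mu) (hnu : IsPartition nu)
    (hex : ∃ lam0, IsPartition lam0 ∧ VStrip lam0 mu ∧ HStrip lam0 nu) :
    ∀ s ∈ Sset mu nu,
      ({t ∈ Tset mu nu | s.1 < t.1} = {t ∈ Tset mu nu | t.2 ≤ s.2}) ∧
      ∀ t t' : ℕ × ℕ,
        t ∈ Tset mu nu → s.1 < t.1 →
        (∀ u ∈ Tset mu nu, s.1 < u.1 → t.1 ≤ u.1) →
        t' ∈ Tset mu nu → t'.2 ≤ s.2 →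
        (∀ u ∈ Tset mu nu, u.2 ≤ s.2 → u.2 ≤ t'.2) →
        t = t' := by
  rintro ⟨i, j⟩ ⟨hmuij, hnuij⟩
  simp only at hmuij hnuij
  -- Key: for any t ∈ T, i < t.1 ↔ t.2 ≤ j
  have key : ∀ t ∈ Tset mu nu, (i < t.1 ↔ t.2 ≤ j) := by
    rintro ⟨a, b⟩ ⟨hta, htb⟩
    simp only at hta htb ⊢
    constructor
    · intro hia
      -- b = nu a; show nu a ≤ j using ptranspose nu j = i + 1
      by_contra hbj
      push_neg at hbj
      rw [← htb] at hbj
      have := (transpose_lt_iff hnu j a).1 hbj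
      rw [hnuij] at this
      omega
    · intro hbj
      -- a = ptranspose mu b ≥ ptranspose mu j > i since j < mu i = j+1... 
      have hji : i < ptranspose mu b := by
        apply (transpose_lt_iff hmu b i).1
        omega
      omega
  constructor
  · ext t
    simp only [Set.mem_setOf_eq]
    constructor
    · rintro ⟨ht, hlt⟩
      exact ⟨ht, (key t ht).1 hlt⟩
    · rintro ⟨ht, hle⟩
      exact ⟨ht, (key t ht).2 hle⟩
  · intro t t' ht hlt hmin ht' hle' hmax
    have h1 : t.2 ≤ j := (key t ht).1 hlt
    have h2 : i < t'.1 := (key t' ht').2 hle'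
    have h3 : t.1 ≤ t'.1 := hmin t' ht' h2
    have h4 : t.2 ≤ t'.2 := hmax t ht h1
    obtain ⟨a, b⟩ := t
    obtain ⟨a', b'⟩ := t'
    obtain ⟨hta, htb⟩ := ht
    obtain ⟨hta', htb'⟩ := ht'
    simp only at hta htb hta' htb' h1 h2 h3 h4 ⊢
    have hb : b' ≤ b := by
      rw [← htb, ← htb']
      exact part_antitone' hnu h3
    have hbeq : b = b' := le_antisymm h4 hb
    have haeq : a = a' := by rw [← hta, ← hta', hbeq]
    exact Prod.ext haeq hbeq
end
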